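/- arXiv:1703.10011 — 11 statements merged into one kernel-verified Lean document; each statement's English description precedes it below -/
import Mathlib

section
/- Let T : H → H₁ be a densely defined closed linear operator between complex Hilbert spaces and let F₁ ⊆ H₁ be a closed subspace with R(T) ⊆ F₁. Then the following are equivalent: (i) R(T) is closed and R(T) = F₁; (ii) there exists a constant c > 0 such that ‖y‖ ≤ c‖T*y‖ for every y ∈ D(T*) ∩ F₁. -/
open LinearPMap

def LinearPMap.ranSet {R E F : Type*} [Ring R] [AddCommGroup E] [Module R E]
    [AddCommGroup F] [Module R F] (T : E →ₗ.[R] F) : Set F :=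
  Set.range fun x : T.domain => T x

/-!
(i) ⇒ (ii): by the open mapping theorem applied to the projection `graph T → R(T)`, every
`y ∈ R(T)` is `T x` with `‖x‖ ≤ C ‖y‖`, so `‖y‖² = ⟪T* y, x⟫ ≤ C ‖T* y‖ ‖y‖`.

(ii) ⇒ (i): fix `z ∈ F₁`. Since `F₁ᗮ ⊆ Z(T*)`, projecting `y ∈ D(T*)` onto `F₁` changes neither
`T* y` nor `⟪z, y⟫`, so `T* y ↦ ⟪z, y⟫` is a well-defined functional on `R(T*)` bounded by
`c ‖z‖`. Hahn–Banach and Riesz give `x₀` with `⟪x₀, T* y⟫ = ⟪z, y⟫` on `D(T*)`, i.e. `(x₀, z)` lies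
in the graph of `T** = T`, hence `z ∈ R(T)`.
-/

open scoped InnerProductSpace

theorem LinearMap.exists_inner_eq_of_norm_le_mul_norm {𝕜 E M : Type*} [RCLike 𝕜]
    [NormedAddCommGroup E] [InnerProductSpace 𝕜 E] [CompleteSpace E] [AddCommGroup M]
    [Module 𝕜 M] (L : M →ₗ[𝕜] E) (φ : M →ₗ[𝕜] 𝕜) (C : ℝ) (h : ∀ m, ‖φ m‖ ≤ C * ‖L m‖) :
    ∃ x₀ : E, ∀ m, φ m = ⟪x₀, L m⟫_𝕜 := by
  have hker : LinearMap.ker L ≤ LinearMap.ker φ := fun m hm => by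
    simpa [LinearMap.mem_ker.1 hm] using h m
  let ψ₀ : LinearMap.range L →ₗ[𝕜] 𝕜 :=
    (LinearMap.ker L).liftQ φ hker ∘ₗ L.quotKerEquivRange.symm.toLinearMap
  have hψ₀ : ∀ m, ψ₀ ⟨L m, LinearMap.mem_range_self L m⟩ = φ m := fun m => by
    simp [ψ₀, LinearMap.quotKerEquivRange_symm_apply_image]
  have hψ₀_le : ∀ u, ‖ψ₀ u‖ ≤ C * ‖u‖ := by
    rintro ⟨-, m, rfl⟩
    exact (hψ₀ m).symm ▸ h m
  obtain ⟨ψ, hψ, -⟩ := exists_extension_norm_eq _ (ψ₀.mkContinuous C hψ₀_le)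
  refine ⟨(InnerProductSpace.toDual 𝕜 E).symm ψ, fun m => ?_⟩
  rw [InnerProductSpace.toDual_symm_apply, ← hψ₀]
  exact (hψ ⟨L m, LinearMap.mem_range_self L m⟩).symm

namespace LinearPMap

section Banach

variable {𝕜 E F : Type*} [NontriviallyNormedField 𝕜] [NormedAddCommGroup E] [NormedSpace 𝕜 E]
  [NormedAddCommGroup F] [NormedSpace 𝕜 F] [CompleteSpace E] [CompleteSpace F]

theorem exists_preimage_norm_le_of_isClosed_ranSet {T : E →ₗ.[𝕜] F} (hT : T.IsClosed)
    (hR : _root_.IsClosed T.ranSet) :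
    ∃ C > 0, ∀ y ∈ T.ranSet, ∃ x : T.domain, T x = y ∧ ‖(x : E)‖ ≤ C * ‖y‖ := by
  let R : Submodule 𝕜 F := LinearMap.range T.toFun
  have : CompleteSpace R := hR.completeSpace_coe
  have : CompleteSpace T.graph := hT.completeSpace_coe
  have hsnd_mem : ∀ g : T.graph, (g : E × F).2 ∈ R := fun g => by
    obtain ⟨x, -, hx⟩ := T.mem_graph_iff.1 g.2
    exact ⟨x, hx⟩
  let Φ : T.graph →L[𝕜] R :=
    ((ContinuousLinearMap.snd 𝕜 E F).comp T.graph.subtypeL).codRestrict R hsnd_mem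
  have hΦ : Function.Surjective Φ := by
    rintro ⟨-, x, rfl⟩
    exact ⟨⟨((x : E), T x), T.mem_graph x⟩, rfl⟩
  obtain ⟨C, hC, hpre⟩ := Φ.exists_preimage_norm_le hΦ
  refine ⟨C, hC, fun y hy => ?_⟩
  obtain ⟨g, hgy, hg⟩ := hpre ⟨y, hy⟩
  obtain ⟨x, hx₁, hx₂⟩ := T.mem_graph_iff.1 g.2
  refine ⟨x, hx₂.trans (congrArg Subtype.val hgy), ?_⟩
  calc ‖(x : E)‖ = ‖(g : E × F).1‖ := by rw [hx₁]
    _ ≤ ‖g‖ := norm_fst_le _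
    _ ≤ C * ‖y‖ := hg

end Banach

variable {𝕜 E F : Type*} [RCLike 𝕜] [NormedAddCommGroup E] [InnerProductSpace 𝕜 E]
  [NormedAddCommGroup F] [InnerProductSpace 𝕜 F] [CompleteSpace E]

theorem exists_mem_adjoint_domain_of_inner_add_eq_zero {T : E →ₗ.[𝕜] F}
    (hT : Dense (T.domain : Set E)) {a : E} {b : F}
    (h : ∀ u : T.domain, ⟪a, u⟫_𝕜 + ⟪b, T u⟫_𝕜 = 0) :
    ∃ hb : b ∈ T†.domain, T† ⟨b, hb⟩ = -a := by
  have h' : ∀ u : T.domain, ⟪-a, u⟫_𝕜 = ⟪b, T u⟫_𝕜 := fun u => by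
    rw [inner_neg_left]
    linear_combination -h u
  exact ⟨mem_adjoint_domain_of_exists b ⟨-a, h'⟩, adjoint_apply_eq hT _ h'⟩

theorem mem_graph_of_inner_adjoint_eq [CompleteSpace F] {T : E →ₗ.[𝕜] F}
    (hT : Dense (T.domain : Set E)) (hc : T.IsClosed) {x : E} {z : F}
    (h : ∀ y : T†.domain, ⟪x, T† y⟫_𝕜 = ⟪z, (y : F)⟫_𝕜) : (x, z) ∈ T.graph := by
  -- `graph T` is closed, so it is its own double orthogonal complement in `E × F` with the
  -- `L²` inner product; its orthogonal complement consists of the pairs `(-T* b, b)`.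
  let e := WithLp.prodContinuousLinearEquiv 2 𝕜 E F
  let G : Submodule 𝕜 (WithLp 2 (E × F)) := T.graph.comap (e : WithLp 2 (E × F) →ₗ[𝕜] E × F)
  have hG : _root_.IsClosed (G : Set (WithLp 2 (E × F))) := hc.preimage e.continuous
  suffices WithLp.toLp 2 (x, z) ∈ Gᗮᗮ by
    rwa [Submodule.orthogonal_orthogonal_eq_closure, hG.submodule_topologicalClosure_eq] at this
  rw [Submodule.mem_orthogonal]
  intro q hq
  obtain ⟨hb, hTb⟩ := exists_mem_adjoint_domain_of_inner_add_eq_zero hT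
    (a := q.fst) (b := q.snd) fun u => by
      simpa [WithLp.prod_inner_apply] using
        (Submodule.mem_orthogonal' _ _).1 hq (WithLp.toLp 2 ((u : E), T u)) (T.mem_graph u)
  have hq' := congrArg (starRingEnd 𝕜) (h ⟨_, hb⟩)
  simp only [hTb, inner_neg_right, _root_.map_neg, inner_conj_symm] at hq'
  rw [WithLp.prod_inner_apply]
  exact neg_eq_iff_add_eq_zero.mp hq'

theorem exists_adjoint_starProjection_eq {T : E →ₗ.[𝕜] F} (hT : Dense (T.domain : Set E))
    (K : Submodule 𝕜 F) [K.HasOrthogonalProjection] (hRK : T.ranSet ⊆ K) (y : T†.domain) :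
    ∃ hPy : K.starProjection y ∈ T†.domain, T† ⟨K.starProjection y, hPy⟩ = T† y := by
  set w := (y : F) - K.starProjection y
  obtain ⟨hw, hTw⟩ := exists_mem_adjoint_domain_of_inner_add_eq_zero hT (a := 0) (b := w)
    fun u => by
      rw [inner_zero_left, zero_add]
      exact K.inner_left_of_mem_orthogonal (hRK ⟨u, rfl⟩) (K.sub_starProjection_mem_orthogonal _)
  have hPy : K.starProjection y = (y : F) - w := by simp [w]
  refine ⟨hPy ▸ sub_mem y.2 hw, ?_⟩
  calc T† ⟨_, _⟩ = T† (y - ⟨w, hw⟩) := congrArg T† (Subtype.ext hPy)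
    _ = T† y := by rw [T†.map_sub, hTw, neg_zero, sub_zero]

theorem exists_norm_le_mul_norm_adjoint_of_isClosed_ranSet [CompleteSpace F] {T : E →ₗ.[𝕜] F}
    (hT : Dense (T.domain : Set E)) (hc : T.IsClosed) (hR : _root_.IsClosed T.ranSet) :
    ∃ C > 0, ∀ (y : F) (hy : y ∈ T†.domain), y ∈ T.ranSet → ‖y‖ ≤ C * ‖T† ⟨y, hy⟩‖ := by
  obtain ⟨C, hC, hpre⟩ := exists_preimage_norm_le_of_isClosed_ranSet hc hR
  refine ⟨C, hC, fun y hy hyR => ?_⟩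
  obtain ⟨x, rfl, hx⟩ := hpre y hyR
  set y' : T†.domain := ⟨T x, hy⟩
  have hsq : ‖T x‖ * ‖T x‖ ≤ C * ‖T† y'‖ * ‖T x‖ :=
    calc ‖T x‖ * ‖T x‖ = RCLike.re ⟪T x, T x⟫_𝕜 := (inner_self_eq_norm_mul_norm _).symm
      _ = RCLike.re ⟪T† y', x⟫_𝕜 := by rw [adjoint_isFormalAdjoint hT y' x]
      _ ≤ ‖T† y'‖ * ‖(x : E)‖ := (RCLike.re_le_norm _).trans (norm_inner_le_norm _ _)
      _ ≤ ‖T† y'‖ * (C * ‖T x‖) := by gcongr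
      _ = C * ‖T† y'‖ * ‖T x‖ := by ring
  rcases (norm_nonneg (T x)).eq_or_lt with h0 | h0
  · rw [← h0]
    positivity
  · exact le_of_mul_le_mul_right hsq h0

theorem subset_ranSet_of_norm_le_mul_norm_adjoint [CompleteSpace F] {T : E →ₗ.[𝕜] F}
    (hT : Dense (T.domain : Set E)) (hc : T.IsClosed) (K : Submodule 𝕜 F)
    [K.HasOrthogonalProjection] (hRK : T.ranSet ⊆ K) (C : ℝ)
    (h : ∀ (y : F) (hy : y ∈ T†.domain), y ∈ K → ‖y‖ ≤ C * ‖T† ⟨y, hy⟩‖) :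
    (K : Set F) ⊆ T.ranSet := by
  intro z hz
  have hbound : ∀ y : T†.domain, ‖⟪z, (y : F)⟫_𝕜‖ ≤ C * ‖z‖ * ‖T† y‖ := fun y => by
    obtain ⟨hPy, hTPy⟩ := exists_adjoint_starProjection_eq hT K hRK y
    calc ‖⟪z, (y : F)⟫_𝕜‖ = ‖⟪z, K.starProjection y⟫_𝕜‖ := by
          rw [← K.inner_starProjection_left_eq_right, K.starProjection_eq_self_iff.2 hz]
      _ ≤ ‖z‖ * ‖K.starProjection y‖ := norm_inner_le_norm _ _
      _ ≤ ‖z‖ * (C * ‖T† ⟨_, hPy⟩‖) := by gcongr; exact h _ hPy (K.starProjection_apply_mem _)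
      _ = C * ‖z‖ * ‖T† y‖ := by rw [hTPy]; ring
  obtain ⟨x₀, hx₀⟩ := LinearMap.exists_inner_eq_of_norm_le_mul_norm T†.toFun
    (innerₛₗ 𝕜 z ∘ₗ T†.domain.subtype) (C * ‖z‖) hbound
  obtain ⟨x, -, hx⟩ := T.mem_graph_iff.1 (mem_graph_of_inner_adjoint_eq hT hc fun y => (hx₀ y).symm)
  exact ⟨x, hx⟩

end LinearPMap

/-- For a densely defined closed operator `T : H → H₁` and a closed subspace
`F₁ ⊇ R(T)`, the range of `T` is closed and equal to `F₁` iff there is `c > 0` with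
`‖y‖ ≤ c‖T*y‖` for all `y ∈ D(T*) ∩ F₁`. -/
theorem stmt1 {H H₁ : Type*} [NormedAddCommGroup H] [InnerProductSpace ℂ H] [CompleteSpace H]
    [NormedAddCommGroup H₁] [InnerProductSpace ℂ H₁] [CompleteSpace H₁]
    (T : H →ₗ.[ℂ] H₁) (hdense : Dense (T.domain : Set H)) (hclosed : T.IsClosed)
    (F₁ : Submodule ℂ H₁) (hF₁ : IsClosed (F₁ : Set H₁))
    (hRF₁ : T.ranSet ⊆ (F₁ : Set H₁)) :
    (IsClosed T.ranSet ∧ T.ranSet = (F₁ : Set H₁)) ↔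
      ∃ c > (0 : ℝ), ∀ (y : H₁) (hy : y ∈ T.adjoint.domain), y ∈ F₁ →
        ‖y‖ ≤ c * ‖T.adjoint ⟨y, hy⟩‖ := by
  constructor
  · rintro ⟨hR, hRF⟩
    obtain ⟨c, hc, h⟩ := exists_norm_le_mul_norm_adjoint_of_isClosed_ranSet hdense hclosed hR
    exact ⟨c, hc, fun y hy hyF => h y hy (hRF ▸ hyF)⟩
  · rintro ⟨c, -, h⟩
    have : CompleteSpace F₁ := hF₁.completeSpace_coe
    have hRF : T.ranSet = F₁ :=
      hRF₁.antisymm (subset_ranSet_of_norm_le_mul_norm_adjoint hdense hclosed F₁ hRF₁ c h)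
    exact ⟨hRF ▸ hF₁, hRF⟩
end

section
/- Let T : H → H₁ be a densely defined closed linear operator between complex Hilbert spaces and let F₁ ⊆ H₁ be a closed subspace with R(T) ⊆ F₁. Then the following are equivalent: (i) there exists c > 0 such that ‖y‖ ≤ c‖T*y‖ for every y ∈ D(T*) ∩ F₁; (ii) R(T*) is closed and the orthogonal complement of F₁ equals the kernel Z(T*). -/
/-!
Let `S` be the restriction of `T*` to `D(T*) ∩ F₁`. Since `R(T) ⊆ F₁` we have `F₁ᗮ ⊆ Z(T*)`, and
`H₁ = F₁ ⊕ F₁ᗮ`; hence `S` has the same range as `T*`, and `S` is injective iff `Z(T*) = F₁ᗮ`.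
Condition (i) says that `S` is bounded below. As `S` is closed, being bounded below is equivalent
to being injective with closed range, by the open mapping theorem applied on the graph of `S`.
-/

open LinearPMap

/-- The kernel of a `LinearPMap` as a set. -/
def LinearPMap.kerSet {R E F : Type*} [Ring R] [AddCommGroup E] [Module R E]
    [AddCommGroup F] [Module R F] (T : E →ₗ.[R] F) : Set E :=
  {x : E | ∃ hx : x ∈ T.domain, T ⟨x, hx⟩ = 0}

open Function

namespace LinearPMap

section Algebra

variable {R E F : Type*} [Ring R] [AddCommGroup E] [Module R E] [AddCommGroup F] [Module R F]
  {K L : Submodule R E}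

theorem mem_domRestrict_domain {f : E →ₗ.[R] F} {x : E} :
    x ∈ (f.domRestrict K).domain ↔ x ∈ K ∧ x ∈ f.domain :=
  Iff.rfl

theorem domRestrict_apply_eq {f : E →ₗ.[R] F} (x : (f.domRestrict K).domain) :
    f.domRestrict K x = f ⟨x, (mem_domRestrict_domain.mp x.2).2⟩ :=
  domRestrict_apply rfl

theorem exists_mem_sub_mem_apply_eq (f : E →ₗ.[R] F) (hKL : Codisjoint K L)
    (hL : (L : Set E) ⊆ f.kerSet) (x : f.domain) :
    ∃ k : f.domain, (k : E) ∈ K ∧ (x : E) - k ∈ L ∧ f k = f x := by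
  obtain ⟨k, l, hk, hl, hkl⟩ := Submodule.codisjoint_iff_exists_add_eq.mp hKL x
  obtain ⟨hl_dom, hl_zero⟩ := hL hl
  refine ⟨x - ⟨l, hl_dom⟩, ?_, ?_, ?_⟩
  · simpa [← hkl] using hk
  · simpa using hl
  · rw [map_sub, hl_zero, sub_zero]

theorem range_domRestrict_eq_ranSet (f : E →ₗ.[R] F) (hKL : Codisjoint K L)
    (hL : (L : Set E) ⊆ f.kerSet) : Set.range (f.domRestrict K) = f.ranSet := by
  apply Set.Subset.antisymm
  · rintro _ ⟨x, rfl⟩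
    exact ⟨_, (domRestrict_apply_eq x).symm⟩
  · rintro _ ⟨x, rfl⟩
    obtain ⟨k, hkK, -, hk⟩ := f.exists_mem_sub_mem_apply_eq hKL hL x
    exact ⟨⟨k, mem_domRestrict_domain.mpr ⟨hkK, k.2⟩⟩, (domRestrict_apply_eq _).trans hk⟩

theorem injective_domRestrict_iff_kerSet_eq (f : E →ₗ.[R] F) (hKL : IsCompl K L)
    (hL : (L : Set E) ⊆ f.kerSet) : Injective (f.domRestrict K) ↔ f.kerSet = L := by
  constructor
  · refine fun hinj ↦ (Set.Subset.antisymm ?_ hL)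
    rintro x ⟨hx, hx_zero⟩
    obtain ⟨k, hkK, hxk, hk⟩ := f.exists_mem_sub_mem_apply_eq hKL.codisjoint hL ⟨x, hx⟩
    have hk_zero :
        (⟨k, mem_domRestrict_domain.mpr ⟨hkK, k.2⟩⟩ : (f.domRestrict K).domain) = 0 :=
      hinj <| by rw [map_zero, domRestrict_apply_eq, hk, hx_zero]
    have : (k : E) = 0 := congrArg Subtype.val hk_zero
    simpa [this] using hxk
  · intro hker a b hab
    have hab_ker : (a : E) - b ∈ f.kerSet :=
      ⟨sub_mem a.2.2 b.2.2, by
        rw [← domRestrict_apply (f := f) (x := a - b) rfl, map_sub, hab, sub_self]⟩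
    rw [hker] at hab_ker
    have hab_K : (a : E) - b ∈ K := sub_mem a.2.1 b.2.1
    exact Subtype.ext <| sub_eq_zero.mp <|
      (Submodule.disjoint_def.mp hKL.disjoint) _ hab_K hab_ker

end Algebra

theorem IsClosed.domRestrict {R E F : Type*} [CommRing R] [AddCommGroup E] [Module R E]
    [AddCommGroup F] [Module R F] [TopologicalSpace E] [TopologicalSpace F]
    {f : E →ₗ.[R] F} (hf : f.IsClosed) {K : Submodule R E} (hK : _root_.IsClosed (K : Set E)) :
    (f.domRestrict K).IsClosed := by
  have hgraph : ((f.domRestrict K).graph : Set (E × F)) =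
      (f.graph : Set (E × F)) ∩ Prod.fst ⁻¹' (K : Set E) := by
    ext ⟨x, y⟩
    simp only [SetLike.mem_coe, mem_graph_iff, Set.mem_inter_iff, Set.mem_preimage]
    constructor
    · rintro ⟨z, rfl, rfl⟩
      exact ⟨⟨⟨z, z.2.2⟩, rfl, (domRestrict_apply rfl).symm⟩, z.2.1⟩
    · rintro ⟨⟨z, rfl, rfl⟩, hz⟩
      exact ⟨⟨z, hz, z.2⟩, rfl, domRestrict_apply rfl⟩
  rw [LinearPMap.IsClosed, hgraph]
  exact hf.inter (hK.preimage continuous_fst)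

theorem IsClosed.exists_norm_le_iff_injective_and_isClosed_range {𝕜 E F : Type*}
    [NontriviallyNormedField 𝕜] [NormedAddCommGroup E] [NormedSpace 𝕜 E] [CompleteSpace E]
    [NormedAddCommGroup F] [NormedSpace 𝕜 F] [CompleteSpace F]
    {f : E →ₗ.[𝕜] F} (hf : f.IsClosed) :
    (∃ c > (0 : ℝ), ∀ x : f.domain, ‖(x : E)‖ ≤ c * ‖f x‖) ↔
      Injective f ∧ _root_.IsClosed (Set.range f) := by
  have : CompleteSpace f.graph := hf.completeSpace_coe
  let π : f.graph →L[𝕜] F := (ContinuousLinearMap.snd 𝕜 E F).comp f.graph.subtypeL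
  have hπ : ∀ x : f.domain, π ⟨(x, f x), f.mem_graph x⟩ = f x := fun _ ↦ rfl
  have hgraph : ∀ p : f.graph, ∃ x : f.domain, p = ⟨(x, f x), f.mem_graph x⟩ := by
    rintro ⟨p, hp⟩
    obtain ⟨x, rfl⟩ := f.mem_graph_iff'.mp hp
    exact ⟨x, rfl⟩
  have hrange : Set.range π = Set.range f := by
    apply Set.Subset.antisymm
    · rintro _ ⟨p, rfl⟩
      obtain ⟨x, rfl⟩ := hgraph p
      exact ⟨x, rfl⟩
    · rintro _ ⟨x, rfl⟩
      exact ⟨_, hπ x⟩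
  constructor
  · rintro ⟨c, hc, hbound⟩
    have hπ_bound : ∀ p, ‖p‖ ≤ (max c 1).toNNReal * ‖π p‖ := by
      intro p
      obtain ⟨x, rfl⟩ := hgraph p
      rw [Real.coe_toNNReal _ (le_max_of_le_right zero_le_one), hπ]
      refine max_le ((hbound x).trans ?_) ?_
      · gcongr; exact le_max_left c 1
      · exact le_mul_of_one_le_left (norm_nonneg _) (le_max_right c 1)
    refine ⟨fun x y hxy ↦ ?_, hrange ▸ (π.antilipschitz_of_bound hπ_bound).isClosed_range
      π.uniformContinuous⟩
    have := hbound (x - y)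
    rw [map_sub, hxy, sub_self, norm_zero, mul_zero, norm_le_zero_iff] at this
    exact sub_eq_zero.mp (Subtype.ext this)
  · rintro ⟨hinj, hclosed⟩
    have hπ_inj : Injective π := by
      intro p q hpq
      obtain ⟨x, rfl⟩ := hgraph p
      obtain ⟨y, rfl⟩ := hgraph q
      have hxy : x = y := hinj (by simpa only [hπ] using hpq)
      rw [hxy]
    obtain ⟨C, hC⟩ :=
      π.antilipschitz_of_injective_of_isClosed_range hπ_inj (hrange ▸ hclosed)
    refine ⟨C + 1, by positivity, fun x ↦ ?_⟩
    calc ‖(x : E)‖ ≤ ‖(⟨(x, f x), f.mem_graph x⟩ : f.graph)‖ := le_max_left _ _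
      _ ≤ C * ‖f x‖ := π.bound_of_antilipschitz hC _
      _ ≤ (C + 1) * ‖f x‖ := by gcongr; linarith

theorem orthogonal_subset_kerSet_adjoint {𝕜 E F : Type*} [RCLike 𝕜]
    [NormedAddCommGroup E] [InnerProductSpace 𝕜 E] [CompleteSpace E]
    [NormedAddCommGroup F] [InnerProductSpace 𝕜 F]
    {T : E →ₗ.[𝕜] F} (hT : Dense (T.domain : Set E)) {K : Submodule 𝕜 F}
    (hTK : T.ranSet ⊆ K) : (Kᗮ : Set F) ⊆ T.adjoint.kerSet := by
  intro y hy
  have hy_orth : ∀ x : T.domain, inner 𝕜 (0 : E) x = inner 𝕜 y (T x) := fun x ↦ by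
    rw [inner_zero_left, Submodule.inner_left_of_mem_orthogonal (hTK ⟨x, rfl⟩) hy]
  exact ⟨mem_adjoint_domain_of_exists y ⟨0, hy_orth⟩, adjoint_apply_eq hT _ hy_orth⟩

end LinearPMap

theorem stmt2_general {H H₁ : Type*} [NormedAddCommGroup H] [InnerProductSpace ℂ H] [CompleteSpace H]
    [NormedAddCommGroup H₁] [InnerProductSpace ℂ H₁] [CompleteSpace H₁]
    (T : H →ₗ.[ℂ] H₁) (hdense : Dense (T.domain : Set H))
    (F₁ : Submodule ℂ H₁) (hF₁ : IsClosed (F₁ : Set H₁))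
    (hRF₁ : T.ranSet ⊆ (F₁ : Set H₁)) :
    (∃ c > (0 : ℝ), ∀ (y : H₁) (hy : y ∈ T.adjoint.domain), y ∈ F₁ →
        ‖y‖ ≤ c * ‖T.adjoint ⟨y, hy⟩‖) ↔
      (IsClosed T.adjoint.ranSet ∧ ((F₁ᗮ : Submodule ℂ H₁) : Set H₁) = T.adjoint.kerSet) := by
  have : CompleteSpace F₁ := hF₁.completeSpace_coe
  have hker := orthogonal_subset_kerSet_adjoint hdense hRF₁
  have hbound : (∃ c > (0 : ℝ), ∀ (y : H₁) (hy : y ∈ T.adjoint.domain), y ∈ F₁ →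
        ‖y‖ ≤ c * ‖T.adjoint ⟨y, hy⟩‖) ↔
      ∃ c > (0 : ℝ), ∀ x : (T.adjoint.domRestrict F₁).domain,
        ‖(x : H₁)‖ ≤ c * ‖T.adjoint.domRestrict F₁ x‖ := by
    refine exists_congr fun c ↦ and_congr_right fun _ ↦ ⟨fun h x ↦ ?_, fun h y hy hyF ↦ ?_⟩
    · rw [domRestrict_apply_eq]
      exact h x _ (mem_domRestrict_domain.mp x.2).1
    · exact (h ⟨y, mem_domRestrict_domain.mpr ⟨hyF, hy⟩⟩).trans_eq
        (by rw [domRestrict_apply_eq])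
  have hS : (T.adjoint.domRestrict F₁).IsClosed := (adjoint_isClosed hdense).domRestrict hF₁
  rw [hbound, hS.exists_norm_le_iff_injective_and_isClosed_range,
    T.adjoint.range_domRestrict_eq_ranSet F₁.isCompl_orthogonal.codisjoint hker,
    T.adjoint.injective_domRestrict_iff_kerSet_eq F₁.isCompl_orthogonal hker, and_comm, eq_comm]

/-- For a densely defined closed operator `T : H → H₁` and a closed subspace
`F₁ ⊇ R(T)`: there exists `c > 0` with `‖y‖ ≤ c‖T*y‖` for every `y ∈ D(T*) ∩ F₁` iff
`R(T*)` is closed and `F₁ᗮ = Z(T*)`. -/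
theorem stmt2 {H H₁ : Type*} [NormedAddCommGroup H] [InnerProductSpace ℂ H] [CompleteSpace H]
    [NormedAddCommGroup H₁] [InnerProductSpace ℂ H₁] [CompleteSpace H₁]
    (T : H →ₗ.[ℂ] H₁) (hdense : Dense (T.domain : Set H)) (hclosed : T.IsClosed)
    (F₁ : Submodule ℂ H₁) (hF₁ : IsClosed (F₁ : Set H₁))
    (hRF₁ : T.ranSet ⊆ (F₁ : Set H₁)) :
    (∃ c > (0 : ℝ), ∀ (y : H₁) (hy : y ∈ T.adjoint.domain), y ∈ F₁ →
        ‖y‖ ≤ c * ‖T.adjoint ⟨y, hy⟩‖) ↔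
      (IsClosed T.adjoint.ranSet ∧ ((F₁ᗮ : Submodule ℂ H₁) : Set H₁) = T.adjoint.kerSet) :=
  stmt2_general T hdense F₁ hF₁ hRF₁
end

section
/- Let T : H → H₁ be a densely defined closed linear operator between complex Hilbert spaces and let F₁ ⊆ H₁ be a closed subspace with R(T) ⊆ F₁. Let S₁ denote the restriction of TT* to D(TT*) ∩ F₁ (which maps into F₁). Then the following are equivalent: (i) R(T) is closed and R(T) = F₁; (ii) S₁ is injective and R(S₁) is closed. -/
open LinearPMap

/-!
Record `S₁` through the subspace of triples `(y, T† y, T T† y)`, `y ∈ F₁`; it is closed because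
`T` and `T†` are. The identity `⟪T T† y, y⟫ = ‖T† y‖²` drives both directions.

If `R(T) = F₁` is closed, the open mapping theorem gives `‖y‖ ≤ C ‖T† y‖` on `F₁`, and with
`‖T† y‖² ≤ ‖y‖ ‖T T† y‖` the projection of the triples onto their last entry is bounded below, hence
injective with closed range.

Conversely, let `S₁` be injective with closed range `M ⊆ R(T) ⊆ F₁`. By von Neumann's theorem
(`I + T T†` is onto), a vector `w ∈ F₁ ⊖ M` is `w = v + T T† v`, where `v ∈ F₁` since `R(T) ⊆ F₁`.
Then `0 = ⟪T T† v, w⟫ = ‖T† v‖² + ‖T T† v‖²`, so `T T† v = 0`, hence `v = 0` and `w = 0`. Thus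
`F₁ ⊆ M ⊆ R(T) ⊆ F₁`.
-/

section BoundedBelow

variable {𝕜 E F : Type*} [NontriviallyNormedField 𝕜]
  [NormedAddCommGroup E] [NormedSpace 𝕜 E] [CompleteSpace E]
  [NormedAddCommGroup F] [NormedSpace 𝕜 F]

theorem ContinuousLinearMap.injOn_and_isClosed_image_of_norm_le (g : E →L[𝕜] F)
    {V : Submodule 𝕜 E} (hV : IsClosed (V : Set E)) {C : ℝ} (h : ∀ v ∈ V, ‖v‖ ≤ C * ‖g v‖) :
    Set.InjOn g V ∧ IsClosed (g '' V) := by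
  have := hV.completeSpace_coe
  have hanti : AntilipschitzWith C.toNNReal (g.comp V.subtypeL) :=
    ContinuousLinearMap.antilipschitz_of_bound _ fun v =>
      (h v v.2).trans (mul_le_mul_of_nonneg_right C.le_coe_toNNReal (norm_nonneg _))
  refine ⟨fun v hv w hw hvw => ?_, ?_⟩
  · simpa using hanti.injective (a₁ := ⟨v, hv⟩) (a₂ := ⟨w, hw⟩) hvw
  · have hrange : g '' V = Set.range (g.comp V.subtypeL) := by ext; simp
    exact hrange ▸ hanti.isClosed_range (g.comp V.subtypeL).uniformContinuous

end BoundedBelow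

namespace LinearPMap

section Graphs

variable {R E F G : Type*} [Ring R] [AddCommGroup E] [Module R E] [AddCommGroup F] [Module R F]
  [AddCommGroup G] [Module R G]

def chainGraph (f : E →ₗ.[R] F) (g : F →ₗ.[R] G) : Submodule R (E × F × G) :=
  f.graph.comap (LinearMap.id.prodMap (LinearMap.fst R F G)) ⊓
    g.graph.comap (LinearMap.snd R E (F × G))

theorem mem_chainGraph {f : E →ₗ.[R] F} {g : F →ₗ.[R] G} {p : E × F × G} :
    p ∈ f.chainGraph g ↔ (p.1, p.2.1) ∈ f.graph ∧ p.2 ∈ g.graph := Iff.rfl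

theorem mk_mem_chainGraph_iff {f : E →ₗ.[R] F} {g : F →ₗ.[R] G} {x : E} {y : F} {z : G} :
    (x, y, z) ∈ f.chainGraph g ↔ ∃ (hx : x ∈ f.domain) (hy : f ⟨x, hx⟩ ∈ g.domain),
      f ⟨x, hx⟩ = y ∧ g ⟨f ⟨x, hx⟩, hy⟩ = z := by
  constructor
  · intro h
    obtain ⟨hf, hg⟩ := mem_chainGraph.1 h
    obtain ⟨⟨x', hx⟩, hx', hfx⟩ := (mem_graph_iff f).1 hf
    obtain ⟨⟨y', hy⟩, hy', hgy⟩ := (mem_graph_iff g).1 hg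
    subst hx' hfx hy'
    exact ⟨hx, hy, rfl, hgy⟩
  · rintro ⟨hx, hy, rfl, rfl⟩
    exact ⟨f.mem_graph ⟨x, hx⟩, g.mem_graph ⟨_, hy⟩⟩

end Graphs

theorem isClosed_chainGraph {R E F G : Type*} [CommRing R] [AddCommGroup E] [Module R E]
    [AddCommGroup F] [Module R F] [AddCommGroup G] [Module R G]
    [TopologicalSpace E] [TopologicalSpace F] [TopologicalSpace G]
    {f : E →ₗ.[R] F} {g : F →ₗ.[R] G} (hf : f.IsClosed) (hg : g.IsClosed) :
    _root_.IsClosed (f.chainGraph g : Set (E × F × G)) :=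
  (hf.preimage (continuous_fst.prodMk continuous_snd.fst)).inter (hg.preimage continuous_snd)

section Banach

variable {𝕜 E F : Type*} [NontriviallyNormedField 𝕜]
  [NormedAddCommGroup E] [NormedSpace 𝕜 E] [CompleteSpace E]
  [NormedAddCommGroup F] [NormedSpace 𝕜 F] [CompleteSpace F]

theorem exists_preimage_norm_le {T : E →ₗ.[𝕜] F} (hT : T.IsClosed)
    (hR : _root_.IsClosed (Set.range T)) :
    ∃ C > 0, ∀ y ∈ Set.range T, ∃ x : T.domain, T x = y ∧ ‖(x : E)‖ ≤ C * ‖y‖ := by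
  let R := LinearMap.range T.toFun
  have : CompleteSpace T.graph := hT.completeSpace_coe
  have : CompleteSpace R := hR.completeSpace_coe
  let π : T.graph →L[𝕜] R := (ContinuousLinearMap.snd 𝕜 E F ∘L T.graph.subtypeL).codRestrict R
    fun ⟨p, hp⟩ => by
      obtain ⟨x, -, hx⟩ := (mem_graph_iff T).1 hp
      exact ⟨x, hx⟩
  have hπ : Function.Surjective π := by
    rintro ⟨-, x, rfl⟩
    exact ⟨⟨_, T.mem_graph x⟩, rfl⟩
  obtain ⟨C, hC, hpre⟩ := π.exists_preimage_norm_le hπ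
  refine ⟨C, hC, ?_⟩
  rintro _ ⟨x₀, rfl⟩
  obtain ⟨⟨p, hp⟩, hpy, hpC⟩ := hpre ⟨T x₀, x₀, rfl⟩
  obtain ⟨x, hxp, hTx⟩ := (mem_graph_iff T).1 hp
  refine ⟨x, hTx.trans (congrArg Subtype.val hpy), ?_⟩
  rw [hxp]
  exact (norm_fst_le p).trans hpC

end Banach

section Hilbert

variable {𝕜 E F : Type*} [RCLike 𝕜]
  [NormedAddCommGroup E] [InnerProductSpace 𝕜 E] [CompleteSpace E]
  [NormedAddCommGroup F] [InnerProductSpace 𝕜 F] {T : E →ₗ.[𝕜] F}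

local notation "⟪" x ", " y "⟫" => inner 𝕜 x y

theorem norm_le_mul_norm_adjoint [CompleteSpace F] (hT : Dense (T.domain : Set E))
    (hTc : T.IsClosed) (hR : _root_.IsClosed (Set.range T)) :
    ∃ C > 0, ∀ y : T†.domain, (y : F) ∈ Set.range T → ‖(y : F)‖ ≤ C * ‖T† y‖ := by
  obtain ⟨C, hC, hpre⟩ := exists_preimage_norm_le hTc hR
  refine ⟨C, hC, fun y hy => ?_⟩
  obtain ⟨x, hxy, hx⟩ := hpre y hy
  have hsq : ‖(y : F)‖ ^ 2 ≤ ‖T† y‖ * (C * ‖(y : F)‖) := calc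
    ‖(y : F)‖ ^ 2 = RCLike.re ⟪T† y, (x : E)⟫ := by
      rw [adjoint_isFormalAdjoint hT y x, hxy, inner_self_eq_norm_sq]
    _ ≤ ‖T† y‖ * ‖(x : E)‖ := (RCLike.re_le_norm _).trans (norm_inner_le_norm _ _)
    _ ≤ ‖T† y‖ * (C * ‖(y : F)‖) := by gcongr
  nlinarith [norm_nonneg (y : F), mul_nonneg hC.le (norm_nonneg (T† y))]

theorem inner_eq_norm_sq_of_mem_chainGraph (hT : Dense (T.domain : Set E)) {p : F × E × F}
    (hp : p ∈ T†.chainGraph T) : ⟪p.2.2, p.1⟫ = (‖p.2.1‖ : 𝕜) ^ 2 := by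
  obtain ⟨y, u, w⟩ := p
  obtain ⟨hy, hu, rfl, rfl⟩ := mk_mem_chainGraph_iff.1 hp
  rw [(adjoint_isFormalAdjoint hT).symm ⟨_, hu⟩ ⟨y, hy⟩, inner_self_eq_norm_sq_to_K]

theorem norm_sq_le_of_mem_chainGraph (hT : Dense (T.domain : Set E)) {p : F × E × F}
    (hp : p ∈ T†.chainGraph T) : ‖p.2.1‖ ^ 2 ≤ ‖p.1‖ * ‖p.2.2‖ := by
  have h := congrArg norm (inner_eq_norm_sq_of_mem_chainGraph hT hp)
  rw [norm_pow, RCLike.norm_ofReal, abs_norm] at h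
  rw [← h, mul_comm]
  exact norm_inner_le_norm _ _

/-- von Neumann: decompose `(0, z)` along the graph of `T` in `E ⊕₂ F`; the orthogonal component,
rotated, lies in the graph of `T†`. -/
theorem exists_mem_chainGraph_add_eq [CompleteSpace F] (hT : Dense (T.domain : Set E))
    (hTc : T.IsClosed) (z : F) : ∃ p ∈ T†.chainGraph T, p.1 + p.2.2 = z := by
  let Γ : Submodule 𝕜 (WithLp 2 (E × F)) :=
    T.graph.comap (WithLp.linearEquiv 2 𝕜 (E × F)).toLinearMap
  have : CompleteSpace Γ := (hTc.preimage (WithLp.prod_continuous_ofLp 2 E F)).completeSpace_coe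
  obtain ⟨g, hg, w, hw, hgw⟩ := Γ.exists_add_mem_mem_orthogonal (WithLp.toLp 2 ((0 : E), z))
  have hadj : (w.snd, -w.fst) ∈ T†.graph := by
    rw [adjoint_graph_eq_graph_adjoint hT, Submodule.mem_adjoint_iff]
    intro a b hab
    have := (Submodule.mem_orthogonal Γ w).1 hw (WithLp.toLp 2 (a, b)) hab
    simp only [WithLp.prod_inner_apply, WithLp.ofLp_fst, WithLp.ofLp_snd, inner_neg_right,
      sub_neg_eq_add] at this ⊢
    linear_combination this
  have hfst : g.fst + w.fst = 0 := (congrArg WithLp.fst hgw).symm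
  have hsnd : g.snd + w.snd = z := (congrArg WithLp.snd hgw).symm
  refine ⟨(w.snd, -w.fst, g.snd), ⟨hadj, ?_⟩, by rw [← hsnd, add_comm]⟩
  rw [← eq_neg_of_add_eq_zero_left hfst]
  exact hg

/-- The graph of `S₁` with the intermediate value recorded: the triples `(y, T† y, T T† y)` with
`y ∈ F₁`. -/
noncomputable def adjointChainGraph (T : E →ₗ.[𝕜] F) (F₁ : Submodule 𝕜 F) :
    Submodule 𝕜 (F × E × F) :=
  T†.chainGraph T ⊓ F₁.comap (LinearMap.fst 𝕜 F (E × F))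

local notation "π₃" =>
  ContinuousLinearMap.comp (ContinuousLinearMap.snd 𝕜 E F) (ContinuousLinearMap.snd 𝕜 F (E × F))

variable {F₁ : Submodule 𝕜 F}

theorem isClosed_adjointChainGraph (hT : Dense (T.domain : Set E)) (hTc : T.IsClosed)
    (hF₁ : _root_.IsClosed (F₁ : Set F)) :
    _root_.IsClosed (T.adjointChainGraph F₁ : Set (F × E × F)) :=
  (isClosed_chainGraph (adjoint_isClosed hT) hTc).inter (hF₁.preimage continuous_fst)

theorem exists_norm_le_mul_of_range_eq [CompleteSpace F] (hT : Dense (T.domain : Set E))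
    (hTc : T.IsClosed) (hF₁ : _root_.IsClosed (F₁ : Set F)) (hR : Set.range T = F₁) :
    ∃ K, ∀ p ∈ T.adjointChainGraph F₁, ‖p‖ ≤ K * ‖π₃ p‖ := by
  obtain ⟨C, hC, hbound⟩ := norm_le_mul_norm_adjoint hT hTc (hR ▸ hF₁)
  refine ⟨C ^ 2 + C + 1, ?_⟩
  rintro ⟨y, u, w⟩ ⟨hp, hyF⟩
  have hyu : ‖y‖ ≤ C * ‖u‖ := by
    obtain ⟨hy, -, rfl, -⟩ := mk_mem_chainGraph_iff.1 hp
    exact hbound ⟨y, hy⟩ (hR ▸ hyF)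
  have hsq := norm_sq_le_of_mem_chainGraph hT hp
  dsimp only at hsq
  have huw : ‖u‖ ≤ C * ‖w‖ := by
    nlinarith [norm_nonneg u, norm_nonneg w, mul_nonneg hC.le (norm_nonneg w)]
  show ‖(y, u, w)‖ ≤ (C ^ 2 + C + 1) * ‖w‖
  simp only [norm_prod_le_iff]
  refine ⟨?_, ?_, ?_⟩ <;> nlinarith [norm_nonneg u, norm_nonneg w]

theorem eq_zero_of_mem_orthogonal_map_adjointChainGraph [CompleteSpace F]
    (hT : Dense (T.domain : Set E)) (hTc : T.IsClosed) (hRF₁ : Set.range T ⊆ F₁)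
    (hinj : Set.InjOn π₃ (T.adjointChainGraph F₁)) {w : F} (hwF : w ∈ F₁)
    (hw : w ∈ ((T.adjointChainGraph F₁).map (π₃ : F × E × F →ₗ[𝕜] F))ᗮ) : w = 0 := by
  obtain ⟨p, hp, hpw⟩ := exists_mem_chainGraph_add_eq hT hTc w
  have hSF : p.2.2 ∈ F₁ := hRF₁ (mem_range_iff.2 ⟨_, hp.2⟩)
  have hpG : p ∈ T.adjointChainGraph F₁ :=
    ⟨hp, show p.1 ∈ F₁ by rw [eq_sub_of_add_eq hpw]; exact sub_mem hwF hSF⟩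
  have horth : ⟪p.2.2, w⟫ = 0 :=
    (Submodule.mem_orthogonal _ _).1 hw _ (Submodule.mem_map_of_mem hpG)
  rw [← hpw, inner_add_right, inner_eq_norm_sq_of_mem_chainGraph hT hp,
    inner_self_eq_norm_sq_to_K] at horth
  have hS : ‖p.2.2‖ = 0 := by
    have : ‖p.2.1‖ ^ 2 + ‖p.2.2‖ ^ 2 = 0 := by exact_mod_cast horth
    nlinarith [norm_nonneg p.2.1, norm_nonneg p.2.2]
  have hp0 : p = 0 := hinj hpG (zero_mem _) (by simpa using hS)
  rw [← hpw, hp0, Prod.fst_zero, Prod.snd_zero, Prod.snd_zero, add_zero]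

theorem isClosed_range_and_eq_iff [CompleteSpace F] (hT : Dense (T.domain : Set E))
    (hTc : T.IsClosed) (hF₁ : _root_.IsClosed (F₁ : Set F)) (hRF₁ : Set.range T ⊆ F₁) :
    (_root_.IsClosed (Set.range T) ∧ Set.range T = F₁) ↔
      Set.InjOn π₃ (T.adjointChainGraph F₁) ∧ _root_.IsClosed (π₃ '' T.adjointChainGraph F₁) := by
  constructor
  · rintro ⟨-, hR⟩
    obtain ⟨K, hK⟩ := exists_norm_le_mul_of_range_eq hT hTc hF₁ hR
    exact ContinuousLinearMap.injOn_and_isClosed_image_of_norm_le π₃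
      (isClosed_adjointChainGraph hT hTc hF₁) hK
  · rintro ⟨hinj, hcl⟩
    set M := (T.adjointChainGraph F₁).map (π₃ : F × E × F →ₗ[𝕜] F)
    have hM : (M : Set F) = π₃ '' T.adjointChainGraph F₁ := Submodule.map_coe _ _
    have : CompleteSpace M := (hM ▸ hcl).completeSpace_coe
    have hMR : (M : Set F) ⊆ Set.range T := by
      rintro _ ⟨p, hp, rfl⟩
      exact mem_range_iff.2 ⟨_, hp.1.2⟩
    have hFM : (F₁ : Set F) ⊆ M := by
      intro z hz
      obtain ⟨r, hr, w, hw, rfl⟩ := M.exists_add_mem_mem_orthogonal z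
      have hwF : w ∈ F₁ := by
        simpa using sub_mem hz (hRF₁ (hMR hr))
      rw [eq_zero_of_mem_orthogonal_map_adjointChainGraph hT hTc hRF₁ hinj hwF hw, add_zero]
      exact hr
    have hR : Set.range T = F₁ := hRF₁.antisymm (hFM.trans hMR)
    exact ⟨hR ▸ hF₁, hR⟩

theorem setOf_exists_apply_adjoint_eq :
    {w : F | ∃ (y : F) (_ : y ∈ F₁) (hy : y ∈ T†.domain) (hTy : T† ⟨y, hy⟩ ∈ T.domain),
      T ⟨T† ⟨y, hy⟩, hTy⟩ = w} = π₃ '' T.adjointChainGraph F₁ := by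
  ext w
  constructor
  · rintro ⟨y, hyF, hy, hTy, rfl⟩
    exact ⟨(y, _, _), ⟨mk_mem_chainGraph_iff.2 ⟨hy, hTy, rfl, rfl⟩, hyF⟩, rfl⟩
  · rintro ⟨⟨y, u, w⟩, ⟨hp, hyF⟩, rfl⟩
    obtain ⟨hy, hTy, rfl, rfl⟩ := mk_mem_chainGraph_iff.1 hp
    exact ⟨y, hyF, hy, hTy, rfl⟩

theorem injOn_adjointChainGraph_iff :
    Set.InjOn π₃ (T.adjointChainGraph F₁) ↔
      ∀ (y z : F), y ∈ F₁ → z ∈ F₁ → ∀ (hy : y ∈ T†.domain) (hz : z ∈ T†.domain)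
        (hTy : T† ⟨y, hy⟩ ∈ T.domain) (hTz : T† ⟨z, hz⟩ ∈ T.domain),
        T ⟨T† ⟨y, hy⟩, hTy⟩ = T ⟨T† ⟨z, hz⟩, hTz⟩ → y = z := by
  constructor
  · intro hinj y z hyF hzF hy hz hTy hTz hyz
    exact congrArg Prod.fst <| hinj ⟨mk_mem_chainGraph_iff.2 ⟨hy, hTy, rfl, rfl⟩, hyF⟩
      ⟨mk_mem_chainGraph_iff.2 ⟨hz, hTz, rfl, rfl⟩, hzF⟩ hyz
  · rintro hinj ⟨y, u, w⟩ ⟨hp, hyF⟩ ⟨z, u', w'⟩ ⟨hq, hzF⟩ hw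
    obtain ⟨hy, hTy, rfl, rfl⟩ := mk_mem_chainGraph_iff.1 hp
    obtain ⟨hz, hTz, rfl, rfl⟩ := mk_mem_chainGraph_iff.1 hq
    obtain rfl := hinj y z hyF hzF hy hz hTy hTz hw
    rfl

end Hilbert

end LinearPMap

/-- For a densely defined closed operator `T : H → H₁` and a closed subspace
`F₁ ⊇ R(T)`, with `S₁` the restriction of `TT*` to `D(TT*) ∩ F₁`:
`R(T)` is closed and equal to `F₁` iff `S₁` is injective and has closed range. -/
theorem stmt3 {H H₁ : Type*} [NormedAddCommGroup H] [InnerProductSpace ℂ H] [CompleteSpace H]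
    [NormedAddCommGroup H₁] [InnerProductSpace ℂ H₁] [CompleteSpace H₁]
    (T : H →ₗ.[ℂ] H₁) (hdense : Dense (T.domain : Set H)) (hclosed : T.IsClosed)
    (F₁ : Submodule ℂ H₁) (hF₁ : IsClosed (F₁ : Set H₁))
    (hRF₁ : T.ranSet ⊆ (F₁ : Set H₁)) :
    (IsClosed T.ranSet ∧ T.ranSet = (F₁ : Set H₁)) ↔
      ((∀ (y z : H₁), y ∈ F₁ → z ∈ F₁ →
          ∀ (hy : y ∈ T.adjoint.domain) (hz : z ∈ T.adjoint.domain)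
            (hTy : T.adjoint ⟨y, hy⟩ ∈ T.domain) (hTz : T.adjoint ⟨z, hz⟩ ∈ T.domain),
            T ⟨T.adjoint ⟨y, hy⟩, hTy⟩ = T ⟨T.adjoint ⟨z, hz⟩, hTz⟩ → y = z) ∧
        IsClosed {w : H₁ | ∃ (y : H₁) (_ : y ∈ F₁) (hy : y ∈ T.adjoint.domain)
          (hTy : T.adjoint ⟨y, hy⟩ ∈ T.domain), T ⟨T.adjoint ⟨y, hy⟩, hTy⟩ = w}) := by
  rw [← injOn_adjointChainGraph_iff, setOf_exists_apply_adjoint_eq]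
  exact isClosed_range_and_eq_iff hdense hclosed hF₁ hRF₁
end

section
/- Let T : H → H₁ be a densely defined closed linear operator between complex Hilbert spaces. If R(T) = R(TT*), then R(T) is closed. -/
/-! `R(T) ⊆ R(T T†)` says that the projection onto the graph of `T` of the closed subspace of pairs
`((x, T x), (y, T† y))` with `T (T† y) = T x` is onto, so by the open mapping theorem `y` can be
chosen with `‖y‖ ≤ C ‖(x, T x)‖`. If `x = T† y₀`, then `T† y = x` because `R(T†) ∩ Z(T) = 0`, hence
`‖x‖² = ⟪y, T x⟫ ≤ C max (‖x‖, ‖T x‖) ‖T x‖`: `T` is bounded below on `D(T) ∩ R(T†)`. Every value of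
`T` is attained on `D(T) ∩ R(T†)`, and a closed operator bounded below on a subspace carrying its
whole range has closed range. -/

open LinearPMap

theorem le_max_mul_of_sq_le {t s C : ℝ} (ht : 0 ≤ t) (hs : 0 ≤ s)
    (h : t ^ 2 ≤ C * max t s * s) : t ≤ max C 1 * s := by
  rcases le_total t s with hts | hst
  · exact hts.trans (le_mul_of_one_le_left hs (le_max_right _ _))
  · rw [max_eq_left hst] at h
    rcases ht.eq_or_lt with rfl | ht
    · positivity
    · have : t ≤ C * s := le_of_mul_le_mul_right (by nlinarith) ht
      exact this.trans (mul_le_mul_of_nonneg_right (le_max_left _ _) hs)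

namespace LinearPMap

section ClosedRange

variable {R E F : Type*} [CommRing R] [NormedAddCommGroup E] [Module R E] [CompleteSpace E]
  [NormedAddCommGroup F] [Module R F]

theorem isClosed_ranSet_of_norm_le {T : E →ₗ.[R] F} (hc : T.IsClosed)
    (M : Submodule R T.domain) (K : ℝ) (hM : ∀ x ∈ M, ‖(x : E)‖ ≤ K * ‖T x‖)
    (hMT : ∀ x : T.domain, ∃ x' ∈ M, T x' = T x) : _root_.IsClosed T.ranSet := by
  refine IsSeqClosed.isClosed fun w v hw hwv => ?_
  have hw' : ∀ n, ∃ x ∈ M, T x = w n := fun n => by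
    obtain ⟨x₀, hx₀⟩ := hw n
    exact hx₀ ▸ hMT x₀
  choose x hxM hTx using hw'
  have hdist : ∀ m n, dist (x m : E) (x n) ≤ K * dist (w m) (w n) := fun m n => by
    simpa [dist_eq_norm, hTx, LinearPMap.map_sub] using hM _ (sub_mem (hxM m) (hxM n))
  have hxC : CauchySeq fun n => (x n : E) := by
    refine cauchySeq_iff_tendsto_dist_atTop_0.2
      (squeeze_zero (fun _ => dist_nonneg) (fun p => hdist p.1 p.2) ?_)
    simpa using (cauchySeq_iff_tendsto_dist_atTop_0.1 hwv.cauchySeq).const_mul K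
  obtain ⟨u, hu⟩ := cauchySeq_tendsto_of_complete hxC
  have hgraph : (u, v) ∈ T.graph := hc.mem_of_tendsto (hu.prodMk_nhds hwv) <|
    Filter.Eventually.of_forall fun n => by
      simpa only [hTx, SetLike.mem_coe] using T.mem_graph (x n)
  obtain ⟨y, -, hy⟩ := T.mem_graph_iff.1 hgraph
  exact ⟨y, hy⟩

end ClosedRange

section Adjoint

variable {𝕜 E F : Type*} [RCLike 𝕜] [NormedAddCommGroup E] [InnerProductSpace 𝕜 E]
  [NormedAddCommGroup F] [InnerProductSpace 𝕜 F] [CompleteSpace E] {T : E →ₗ.[𝕜] F}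

theorem eq_zero_of_apply_eq_zero_of_eq_adjoint (hT : Dense (T.domain : Set E)) {x : T.domain}
    {y : T†.domain} (hxy : (x : E) = T† y) (hx : T x = 0) : x = 0 := by
  have h := adjoint_isFormalAdjoint hT y x
  rw [← hxy, hx, inner_zero_right, inner_self_eq_zero] at h
  exact_mod_cast h

variable (T) in
noncomputable def adjointFactorPairs : Submodule 𝕜 ((E × F) × (F × E)) :=
  T.graph.prod T†.graph ⊓ T.graph.comap
    (((ContinuousLinearMap.snd 𝕜 F E).comp (ContinuousLinearMap.snd 𝕜 (E × F) (F × E))).prod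
      ((ContinuousLinearMap.snd 𝕜 E F).comp (ContinuousLinearMap.fst 𝕜 (E × F) (F × E))) :
      (E × F) × (F × E) →ₗ[𝕜] E × F)

theorem mem_adjointFactorPairs {p : (E × F) × (F × E)} :
    p ∈ T.adjointFactorPairs ↔ (p.1 ∈ T.graph ∧ p.2 ∈ T†.graph) ∧ (p.2.2, p.1.2) ∈ T.graph :=
  Iff.rfl

theorem isClosed_adjointFactorPairs (hT : Dense (T.domain : Set E)) (hc : T.IsClosed) :
    _root_.IsClosed (T.adjointFactorPairs : Set ((E × F) × (F × E))) := by
  rw [adjointFactorPairs, Submodule.coe_inf, Submodule.prod_coe, Submodule.comap_coe]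
  exact (hc.prod (adjoint_isClosed hT)).inter (hc.preimage (by fun_prop))

theorem exists_adjoint_preimage_norm_le [CompleteSpace F] (hT : Dense (T.domain : Set E))
    (hc : T.IsClosed)
    (hran : ∀ x : T.domain, ∃ (x' : T.domain) (y : T†.domain), (x' : E) = T† y ∧ T x' = T x) :
    ∃ C, ∀ x : T.domain, ∃ (x' : T.domain) (y : T†.domain),
      (x' : E) = T† y ∧ T x' = T x ∧ ‖(y : F)‖ ≤ C * ‖((x : E), T x)‖ := by
  have := (isClosed_adjointFactorPairs hT hc).completeSpace_coe
  have := hc.completeSpace_coe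
  let π : T.adjointFactorPairs →L[𝕜] T.graph :=
    ((ContinuousLinearMap.fst 𝕜 _ _).comp T.adjointFactorPairs.subtypeL).codRestrict T.graph
      fun p => p.2.1.1
  have hπ : Function.Surjective π := by
    rintro ⟨⟨a, b⟩, hg⟩
    obtain ⟨x, rfl, rfl⟩ := T.mem_graph_iff.1 hg
    obtain ⟨x', y, hx'y, hTx'⟩ := hran x
    refine ⟨⟨(((x : E), T x), ((y : F), T† y)), ⟨T.mem_graph x, T†.mem_graph y⟩, ?_⟩, rfl⟩
    exact T.mem_graph_iff.2 ⟨x', hx'y, hTx'⟩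
  obtain ⟨C, -, hC⟩ := π.exists_preimage_norm_le hπ
  refine ⟨C, fun x => ?_⟩
  obtain ⟨⟨p, hp⟩, hpx, hpC⟩ := hC ⟨_, T.mem_graph x⟩
  obtain ⟨⟨-, hp₂⟩, hp₃⟩ := mem_adjointFactorPairs.1 hp
  have hp₁ : p.1 = ((x : E), T x) := congrArg Subtype.val hpx
  obtain ⟨y, hy, hTy⟩ := T†.mem_graph_iff.1 hp₂
  obtain ⟨x', hx', hTx'⟩ := T.mem_graph_iff.1 hp₃
  refine ⟨x', y, hx'.trans hTy.symm, hTx'.trans (congrArg Prod.snd hp₁), ?_⟩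
  calc ‖(y : F)‖ = ‖p.2.1‖ := by rw [hy]
    _ ≤ ‖p‖ := (norm_fst_le p.2).trans (norm_snd_le p)
    _ ≤ C * ‖((x : E), T x)‖ := hpC

theorem exists_norm_le_of_eq_adjoint [CompleteSpace F] (hT : Dense (T.domain : Set E))
    (hc : T.IsClosed)
    (hran : ∀ x : T.domain, ∃ (x' : T.domain) (y : T†.domain), (x' : E) = T† y ∧ T x' = T x) :
    ∃ K, ∀ (x : T.domain) (y : T†.domain), (x : E) = T† y → ‖(x : E)‖ ≤ K * ‖T x‖ := by
  obtain ⟨C, hC⟩ := exists_adjoint_preimage_norm_le hT hc hran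
  refine ⟨max C 1, fun x y₀ hxy₀ => ?_⟩
  obtain ⟨x', y, hx'y, hTx', hyC⟩ := hC x
  have hx' : x' = x := by
    refine sub_eq_zero.1 (eq_zero_of_apply_eq_zero_of_eq_adjoint hT (y := y - y₀) ?_ ?_)
    · simp [LinearPMap.map_sub, hx'y, hxy₀]
    · simp [LinearPMap.map_sub, hTx']
  refine le_max_mul_of_sq_le (norm_nonneg _) (norm_nonneg _) ?_
  calc ‖(x : E)‖ ^ 2 = RCLike.re (inner 𝕜 (T† y) (x : E)) := by
        rw [← hx'y, hx', ← inner_self_eq_norm_sq (𝕜 := 𝕜)]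
    _ = RCLike.re (inner 𝕜 (y : F) (T x)) := by rw [adjoint_isFormalAdjoint hT y x]
    _ ≤ ‖(y : F)‖ * ‖T x‖ := (RCLike.re_le_norm _).trans (norm_inner_le_norm _ _)
    _ ≤ C * max ‖(x : E)‖ ‖T x‖ * ‖T x‖ := by
        gcongr
        exact hyC

end Adjoint

end LinearPMap

/-- For a densely defined closed operator `T : H → H₁` between complex Hilbert
spaces, if `R(T) = R(TT*)` then `R(T)` is closed. -/
theorem stmt6 {H H₁ : Type*} [NormedAddCommGroup H] [InnerProductSpace ℂ H] [CompleteSpace H]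
    [NormedAddCommGroup H₁] [InnerProductSpace ℂ H₁] [CompleteSpace H₁]
    (T : H →ₗ.[ℂ] H₁) (hdense : Dense (T.domain : Set H)) (hclosed : T.IsClosed)
    (hran : T.ranSet = {w : H₁ | ∃ (y : H₁) (hy : y ∈ T.adjoint.domain)
      (hTy : T.adjoint ⟨y, hy⟩ ∈ T.domain), T ⟨T.adjoint ⟨y, hy⟩, hTy⟩ = w}) :
    IsClosed T.ranSet := by
  have hran' : ∀ x : T.domain, ∃ (x' : T.domain) (y : T†.domain), (x' : H) = T† y ∧ T x' = T x :=
    fun x => by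
      obtain ⟨y, hy, hTy, hTTy⟩ := hran.le ⟨x, rfl⟩
      exact ⟨⟨_, hTy⟩, ⟨y, hy⟩, rfl, hTTy⟩
  obtain ⟨K, hK⟩ := exists_norm_le_of_eq_adjoint hdense hclosed hran'
  refine isClosed_ranSet_of_norm_le hclosed ((LinearMap.range T†.toFun).comap T.domain.subtype) K
    (fun x ⟨y, hy⟩ => hK x y hy.symm) fun x => ?_
  obtain ⟨x', y, hx'y, hTx'⟩ := hran' x
  exact ⟨x', ⟨y, hx'y.symm⟩, hTx'⟩
end

section
/- Let T : H → H₁ be a densely defined closed linear operator between complex Hilbert spaces and let F₁ ⊆ H₁ be a closed subspace with R(T) ⊆ F₁. Then the restriction S₁ of TT* to D(TT*) ∩ F₁ maps into F₁, is densely defined as an operator in the Hilbert space F₁, and is self-adjoint as an operator in F₁. -/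
/-!
Let `S = TT*` on its maximal domain in `H₁`. Since `⟪TT*x, y⟫ = ⟪T*x, T*y⟫`, `S` is symmetric and
nonnegative, and von Neumann's argument (decompose `(0, z)` against the closed graph of `T`) shows
that `I + S` maps onto `H₁`. As `R(S) ⊆ R(T) ⊆ F₁`, the solution `v` of `v + Sv = z` lies in `F₁`
whenever `z` does, so the part `S₁` of `S` in `F₁` inherits all three properties. A nonnegative
symmetric operator `A` with `I + A` onto is densely defined (a vector `v + Av` orthogonal to the
domain has `‖v‖² + ⟪v, Av⟫ = 0`) and self-adjoint (`ker (I + A*) = R(I + A)ᗮ = 0`).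
-/

open LinearPMap

namespace LinearPMap

section Algebra

variable {R E F G : Type*} [Ring R] [AddCommGroup E] [Module R E] [AddCommGroup F] [Module R F]
  [AddCommGroup G] [Module R G]

def pcompDomain (g : F →ₗ.[R] G) (f : E →ₗ.[R] F) : Submodule R E where
  carrier := {x | ∃ hx : x ∈ f.domain, f ⟨x, hx⟩ ∈ g.domain}
  zero_mem' := ⟨zero_mem _, by convert zero_mem g.domain; exact f.map_zero⟩
  add_mem' := by
    rintro a b ⟨ha, hfa⟩ ⟨hb, hfb⟩
    refine ⟨add_mem ha hb, ?_⟩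
    convert add_mem hfa hfb; exact f.map_add ⟨a, ha⟩ ⟨b, hb⟩
  smul_mem' := by
    rintro c a ⟨ha, hfa⟩
    refine ⟨Submodule.smul_mem _ c ha, ?_⟩
    convert Submodule.smul_mem _ c hfa; exact f.map_smul c ⟨a, ha⟩

theorem pcompDomain_le (g : F →ₗ.[R] G) (f : E →ₗ.[R] F) : pcompDomain g f ≤ f.domain :=
  fun _ hx => hx.fst

/-- The composition `g ∘ f` on its maximal domain; unlike `LinearPMap.comp`, it does not require
`f` to map all of `f.domain` into `g.domain`. -/
def pcomp (g : F →ₗ.[R] G) (f : E →ₗ.[R] F) : E →ₗ.[R] G where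
  domain := pcompDomain g f
  toFun := g.toFun ∘ₗ (f.toFun ∘ₗ Submodule.inclusion (pcompDomain_le g f)).codRestrict g.domain
    fun x => x.2.snd

theorem mem_pcomp_domain {g : F →ₗ.[R] G} {f : E →ₗ.[R] F} {x : E} :
    x ∈ (g.pcomp f).domain ↔ ∃ hx : x ∈ f.domain, f ⟨x, hx⟩ ∈ g.domain :=
  Iff.rfl

theorem pcomp_apply (g : F →ₗ.[R] G) (f : E →ₗ.[R] F) (x : (g.pcomp f).domain) :
    g.pcomp f x = g ⟨f ⟨x, (mem_pcomp_domain.1 x.2).fst⟩, (mem_pcomp_domain.1 x.2).snd⟩ :=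
  rfl

def restrict (A : E →ₗ.[R] E) (p : Submodule R E) (hA : ∀ x, A x ∈ p) : p →ₗ.[R] p where
  domain := A.domain.comap p.subtype
  toFun := (A.toFun ∘ₗ (p.subtype ∘ₗ Submodule.subtype _).codRestrict A.domain fun x => x.2)
    |>.codRestrict p fun _ => hA _

end Algebra

section Inner

open WithLp

variable {𝕜 E F : Type*} [RCLike 𝕜] [NormedAddCommGroup E] [InnerProductSpace 𝕜 E]
  [NormedAddCommGroup F] [InnerProductSpace 𝕜 F]

local notation "⟪" x ", " y "⟫" => inner 𝕜 x y

theorem surjective_coe_add_pcomp_adjoint [CompleteSpace E] [CompleteSpace F] {T : E →ₗ.[𝕜] F}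
    (hT : Dense (T.domain : Set E)) (hc : T.IsClosed) :
    Function.Surjective fun v : (T.pcomp T†).domain => (v : F) + T.pcomp T† v := by
  intro z
  set G := T.graph.comap (WithLp.linearEquiv 2 𝕜 (E × F)).toLinearMap
  have : CompleteSpace G := (hc.preimage (WithLp.prod_continuous_ofLp 2 E F)).completeSpace_coe
  obtain ⟨g, hg, w, hw, hsum⟩ := G.exists_add_mem_mem_orthogonal (toLp 2 (0, z))
  obtain ⟨x, hx, hTx⟩ := T.mem_graph_iff.mp hg
  have hw_eq : w = toLp 2 (-(x : E), z - T x) := by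
    rw [eq_sub_of_add_eq' hsum.symm, WithLp.ext_iff]
    ext <;> simp [hx, hTx]
  -- `w ⊥ graph T` says exactly that `(z - T x, x)` lies in the graph of `T†`
  have hgraph : (z - T x, (x : E)) ∈ T†.graph := by
    rw [adjoint_graph_eq_graph_adjoint hT, Submodule.mem_adjoint_iff]
    intro a b hab
    have := (Submodule.mem_orthogonal G w).mp hw (toLp 2 (a, b)) hab
    simpa [hw_eq, prod_inner_apply, sub_eq_add_neg, add_comm] using this
  obtain ⟨y, hy, hT'y⟩ := T†.mem_graph_iff.mp hgraph
  dsimp only at hy hT'y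
  have hT'y_mem : T† y ∈ T.domain := hT'y ▸ x.2
  refine ⟨⟨y, y.2, hT'y_mem⟩, ?_⟩
  have : (⟨T† y, hT'y_mem⟩ : T.domain) = x := Subtype.ext hT'y
  change (y : F) + T ⟨T† y, hT'y_mem⟩ = z
  rw [this, hy, sub_add_cancel]

theorem isFormalAdjoint_pcomp_adjoint [CompleteSpace E] {T : E →ₗ.[𝕜] F}
    (hT : Dense (T.domain : Set E)) : (T.pcomp T†).IsFormalAdjoint (T.pcomp T†) := fun x y =>
  let hx := mem_pcomp_domain.1 x.2
  let hy := mem_pcomp_domain.1 y.2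
  ((adjoint_isFormalAdjoint hT).symm ⟨_, hx.snd⟩ ⟨y, hy.fst⟩).trans
    (adjoint_isFormalAdjoint hT ⟨x, hx.fst⟩ ⟨_, hy.snd⟩)

theorem re_inner_pcomp_adjoint_nonneg [CompleteSpace E] {T : E →ₗ.[𝕜] F}
    (hT : Dense (T.domain : Set E)) (x : (T.pcomp T†).domain) :
    0 ≤ RCLike.re ⟪(x : F), T.pcomp T† x⟫ := by
  let hx := mem_pcomp_domain.1 x.2
  rw [pcomp_apply, ← adjoint_isFormalAdjoint hT ⟨x, hx.fst⟩ ⟨_, hx.snd⟩]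
  exact inner_self_nonneg

section Restrict

variable {A : E →ₗ.[𝕜] E} {p : Submodule 𝕜 E} (hA : ∀ x, A x ∈ p)

theorem IsFormalAdjoint.restrict (h : A.IsFormalAdjoint A) :
    (A.restrict p hA).IsFormalAdjoint (A.restrict p hA) := fun x y => h ⟨x, x.2⟩ ⟨y, y.2⟩

theorem re_inner_restrict_nonneg (h : ∀ x : A.domain, 0 ≤ RCLike.re ⟪(x : E), A x⟫)
    (x : (A.restrict p hA).domain) : 0 ≤ RCLike.re ⟪(x : p), A.restrict p hA x⟫ :=
  h ⟨x, x.2⟩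

theorem surjective_coe_add_restrict (h : Function.Surjective fun v : A.domain => (v : E) + A v) :
    Function.Surjective fun v : (A.restrict p hA).domain => (v : p) + A.restrict p hA v := by
  intro z
  obtain ⟨v, hv⟩ := h z
  have hvp : (v : E) ∈ p := eq_sub_of_add_eq hv ▸ sub_mem z.2 (hA v)
  exact ⟨⟨⟨v, hvp⟩, v.2⟩, Subtype.ext hv⟩

end Restrict

variable [CompleteSpace E] {A : E →ₗ.[𝕜] E}

theorem dense_domain_of_surjective_coe_add (hpos : ∀ x : A.domain, 0 ≤ RCLike.re ⟪(x : E), A x⟫)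
    (hsurj : Function.Surjective fun v : A.domain => (v : E) + A v) :
    Dense (A.domain : Set E) := by
  rw [Submodule.dense_iff_topologicalClosure_eq_top, Submodule.topologicalClosure_eq_top_iff,
    Submodule.eq_bot_iff]
  intro z hz
  obtain ⟨v, rfl⟩ := hsurj z
  have h0 : ⟪(v : E), v + A v⟫ = 0 := Submodule.inner_right_of_mem_orthogonal v.2 hz
  have hv : v = 0 := by
    rw [inner_add_right] at h0
    have hre : RCLike.re ⟪(v : E), v⟫ + RCLike.re ⟪(v : E), A v⟫ = 0 := by
      simpa using congrArg RCLike.re h0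
    exact Subtype.ext (re_inner_self_nonpos.mp (by linarith [hpos v]))
  simp [hv]

theorem adjoint_eq_self_of_surjective_coe_add (hA : A.IsFormalAdjoint A)
    (hd : Dense (A.domain : Set E))
    (hsurj : Function.Surjective fun v : A.domain => (v : E) + A v) : A† = A := by
  have hle : A ≤ A† := hA.le_adjoint hd
  refine (eq_of_le_of_domain_eq hle (le_antisymm hle.1 fun y hy => ?_)).symm
  obtain ⟨v, hv⟩ := hsurj (y + A† ⟨y, hy⟩)
  have horth (x : A.domain) : ⟪(x : E) + A x, y - v⟫ = 0 :=
    calc ⟪(x : E) + A x, y - v⟫ = ⟪(x : E), y + A† ⟨y, hy⟩⟫ - ⟪(x : E), v + A v⟫ := by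
          rw [inner_add_left, inner_sub_right, inner_sub_right, inner_add_right, inner_add_right,
            hA x v, (adjoint_isFormalAdjoint hd).symm x ⟨y, hy⟩]
          ring
      _ = 0 := by rw [← hv, sub_self]
  have hyv : y = v := by
    obtain ⟨x, hx⟩ := hsurj (y - v)
    have h := horth x
    rw [show (x : E) + A x = y - v from hx] at h
    exact sub_eq_zero.mp (inner_self_eq_zero.mp h)
  exact hyv ▸ v.2

end Inner

end LinearPMap

theorem stmt8_general {H H₁ : Type*} [NormedAddCommGroup H] [InnerProductSpace ℂ H] [CompleteSpace H]
    [NormedAddCommGroup H₁] [InnerProductSpace ℂ H₁] [CompleteSpace H₁]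
    (T : H →ₗ.[ℂ] H₁) (hdense : Dense (T.domain : Set H)) (hclosed : T.IsClosed)
    (F₁ : Submodule ℂ H₁) [CompleteSpace F₁]
    (hRF₁ : T.ranSet ⊆ (F₁ : Set H₁)) :
    (∀ (y : H₁) (hy : y ∈ T.adjoint.domain) (hTy : T.adjoint ⟨y, hy⟩ ∈ T.domain),
      y ∈ F₁ → T ⟨T.adjoint ⟨y, hy⟩, hTy⟩ ∈ F₁) ∧
    ∃ S₁ : (↥F₁) →ₗ.[ℂ] (↥F₁),
      (∀ y : F₁, y ∈ S₁.domain ↔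
        ∃ hy : (y : H₁) ∈ T.adjoint.domain, T.adjoint ⟨(y : H₁), hy⟩ ∈ T.domain) ∧
      (∀ (y : S₁.domain) (hy : ((y : F₁) : H₁) ∈ T.adjoint.domain)
        (hTy : T.adjoint ⟨((y : F₁) : H₁), hy⟩ ∈ T.domain),
        ((S₁ y : F₁) : H₁) = T ⟨T.adjoint ⟨((y : F₁) : H₁), hy⟩, hTy⟩) ∧
      Dense (S₁.domain : Set F₁) ∧
      S₁.adjoint = S₁ := by
  have hran (x : (T.pcomp T†).domain) : T.pcomp T† x ∈ F₁ := hRF₁ ⟨_, rfl⟩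
  refine ⟨fun _ _ _ _ => hRF₁ ⟨_, rfl⟩, (T.pcomp T†).restrict F₁ hran, fun _ => Iff.rfl,
    fun _ _ _ => rfl, ?_⟩
  have hsurj := surjective_coe_add_restrict hran (surjective_coe_add_pcomp_adjoint hdense hclosed)
  have hd := dense_domain_of_surjective_coe_add
    (re_inner_restrict_nonneg hran (re_inner_pcomp_adjoint_nonneg hdense)) hsurj
  exact ⟨hd, adjoint_eq_self_of_surjective_coe_add
    ((isFormalAdjoint_pcomp_adjoint hdense).restrict hran) hd hsurj⟩

/-- For a densely defined closed operator `T : H → H₁` and a closed subspace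
`F₁ ⊇ R(T)`, the restriction `S₁` of `TT*` to `D(TT*) ∩ F₁` maps into `F₁`, is densely defined
in the Hilbert space `F₁`, and is self-adjoint as an operator in `F₁`. -/
theorem stmt8 {H H₁ : Type*} [NormedAddCommGroup H] [InnerProductSpace ℂ H] [CompleteSpace H]
    [NormedAddCommGroup H₁] [InnerProductSpace ℂ H₁] [CompleteSpace H₁]
    (T : H →ₗ.[ℂ] H₁) (hdense : Dense (T.domain : Set H)) (hclosed : T.IsClosed)
    (F₁ : Submodule ℂ H₁) [CompleteSpace F₁] (hF₁ : IsClosed (F₁ : Set H₁))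
    (hRF₁ : T.ranSet ⊆ (F₁ : Set H₁)) :
    (∀ (y : H₁) (hy : y ∈ T.adjoint.domain) (hTy : T.adjoint ⟨y, hy⟩ ∈ T.domain),
      y ∈ F₁ → T ⟨T.adjoint ⟨y, hy⟩, hTy⟩ ∈ F₁) ∧
    ∃ S₁ : (↥F₁) →ₗ.[ℂ] (↥F₁),
      (∀ y : F₁, y ∈ S₁.domain ↔
        ∃ hy : (y : H₁) ∈ T.adjoint.domain, T.adjoint ⟨(y : H₁), hy⟩ ∈ T.domain) ∧
      (∀ (y : S₁.domain) (hy : ((y : F₁) : H₁) ∈ T.adjoint.domain)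
        (hTy : T.adjoint ⟨((y : F₁) : H₁), hy⟩ ∈ T.domain),
        ((S₁ y : F₁) : H₁) = T ⟨T.adjoint ⟨((y : F₁) : H₁), hy⟩, hTy⟩) ∧
      Dense (S₁.domain : Set F₁) ∧
      S₁.adjoint = S₁ :=
  stmt8_general T hdense hclosed F₁ hRF₁
end

section
/- Let H₀, H, H₂ be complex Hilbert spaces, and let T : H₀ → H and S : H → H₂ be densely defined closed linear operators such that R(T) ⊆ Z(S). If there exists c > 0 such that ‖v‖ ≤ c‖T*v‖ for every v ∈ D(T*) ∩ Z(S), then Z(S) = R(T); in particular R(T) is closed and every element of the kernel of S lies in the range of T. -/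
/-!
Let `K = Z(S)`, a closed subspace because `S` is closed. For `y ∈ K`, the functional
`T* b ↦ ⟪y, b⟫` on `R(T*)` is well defined and bounded by `c ‖y‖`: splitting `b = b₁ + b₂` along
`K ⊕ Kᗮ`, the part `b₂ ⊥ R(T)` lies in `Z(T*)`, so `T* b = T* b₁` while `⟪y, b⟫ = ⟪y, b₁⟫`, and the
estimate applies to `b₁ ∈ K`. Hahn–Banach and Riesz then give `x` with `⟪T* b, x⟫ = ⟪b, y⟫` for all
`b ∈ D(T*)`, i.e. `(x, y)` lies in the graph of `T** = T`, so `y = T x`.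
-/

open LinearPMap

open scoped InnerProductSpace

section Extension
variable {𝕜 D E : Type*} [RCLike 𝕜] [AddCommGroup D] [Module 𝕜 D]
  [NormedAddCommGroup E] [NormedSpace 𝕜 E]

theorem LinearMap.exists_strongDual_comp_eq_of_norm_le (A : D →ₗ[𝕜] E) (φ : D →ₗ[𝕜] 𝕜) (C : ℝ)
    (hφ : ∀ d, ‖φ d‖ ≤ C * ‖A d‖) : ∃ g : StrongDual 𝕜 E, ∀ d, g (A d) = φ d := by
  have hker : LinearMap.ker A ≤ LinearMap.ker φ := fun d hd => by
    simpa [LinearMap.mem_ker.mp hd] using hφ d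
  set f : LinearMap.range A →ₗ[𝕜] 𝕜 :=
    (LinearMap.ker A).liftQ φ hker ∘ₗ A.quotKerEquivRange.symm.toLinearMap
  have hf : ∀ d, f ⟨A d, LinearMap.mem_range_self A d⟩ = φ d := fun d => by
    have : (⟨A d, LinearMap.mem_range_self A d⟩ : LinearMap.range A) =
        A.quotKerEquivRange (Submodule.Quotient.mk d) :=
      Subtype.ext (A.quotKerEquivRange_apply_mk d).symm
    simp [f, this]
  have hf_bound : ∀ w, ‖f w‖ ≤ C * ‖w‖ := by
    rintro ⟨_, d, rfl⟩
    rw [hf]; exact hφ d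
  obtain ⟨g, hg, -⟩ := exists_extension_norm_eq _ (f.mkContinuous C hf_bound)
  exact ⟨g, fun d => (hg ⟨A d, LinearMap.mem_range_self A d⟩).trans (hf d)⟩

end Extension

namespace LinearPMap

section Kernel
variable {R E F : Type*} [Ring R] [AddCommGroup E] [Module R E] [AddCommGroup F] [Module R F]

def ker (f : E →ₗ.[R] F) : Submodule R E :=
  (LinearMap.ker f.toFun).map f.domain.subtype

theorem mem_ker {f : E →ₗ.[R] F} {x : E} : x ∈ f.ker ↔ x ∈ f.kerSet := by
  simp [ker, kerSet]

theorem coe_ker (f : E →ₗ.[R] F) : (f.ker : Set E) = f.kerSet :=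
  Set.ext fun _ => mem_ker

end Kernel

theorem IsClosed.isClosed_kerSet {R E F : Type*} [CommRing R] [AddCommGroup E] [Module R E]
    [AddCommGroup F] [Module R F] [TopologicalSpace E] [TopologicalSpace F] {f : E →ₗ.[R] F}
    (hf : f.IsClosed) : _root_.IsClosed f.kerSet := by
  have : f.kerSet = (fun x : E => (x, (0 : F))) ⁻¹' f.graph := by
    ext x
    simp [kerSet]
  rw [this]
  exact hf.preimage (.prodMk continuous_id continuous_const)

section Adjoint
variable {𝕜 E F : Type*} [RCLike 𝕜]
  [NormedAddCommGroup E] [InnerProductSpace 𝕜 E] [CompleteSpace E]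
  [NormedAddCommGroup F] [InnerProductSpace 𝕜 F]
  {T : E →ₗ.[𝕜] F}

theorem mem_adjoint_graph_of_forall_inner (hT : Dense (T.domain : Set E)) {b : F} {w : E}
    (h : ∀ p : T.domain, ⟪w, (p : E)⟫_𝕜 = ⟪b, T p⟫_𝕜) : (b, w) ∈ T†.graph :=
  (mem_graph_iff _).mpr ⟨⟨b, mem_adjoint_domain_of_exists b ⟨w, h⟩⟩, rfl, adjoint_apply_eq hT _ h⟩

/-- The inclusion `T** ⊆ T` for closed `T`: in `E ⊕₂ F` the graph of `T` is its own double
orthogonal complement, and a vector `(a, b)` orthogonal to it has `(b, -a)` in the graph of `T†`. -/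
theorem mem_graph_of_forall_inner_adjoint [CompleteSpace F] (hT : Dense (T.domain : Set E))
    (hTc : T.IsClosed) {x : E} {y : F}
    (h : ∀ b : T†.domain, ⟪T† b, x⟫_𝕜 = ⟪(b : F), y⟫_𝕜) : (x, y) ∈ T.graph := by
  set G : Submodule 𝕜 (WithLp 2 (E × F)) :=
    T.graph.comap (WithLp.linearEquiv 2 𝕜 (E × F)).toLinearMap
  have hG : _root_.IsClosed (G : Set (WithLp 2 (E × F))) :=
    hTc.preimage (WithLp.prodContinuousLinearEquiv 2 𝕜 E F).continuous
  suffices WithLp.toLp 2 (x, y) ∈ Gᗮᗮ by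
    rwa [Submodule.orthogonal_orthogonal_eq_closure, hG.submodule_topologicalClosure_eq] at this
  refine (Submodule.mem_orthogonal' _ _).mpr fun u hu => ?_
  obtain ⟨⟨a, b⟩, rfl⟩ : ∃ ab, WithLp.toLp 2 ab = u := ⟨u.ofLp, rfl⟩
  have hab : (b, -a) ∈ T†.graph := mem_adjoint_graph_of_forall_inner hT fun p => by
    have hp := (Submodule.mem_orthogonal G _).mp hu (WithLp.toLp 2 (p, T p)) (T.mem_graph p)
    rw [WithLp.prod_inner_apply, add_eq_zero_iff_eq_neg] at hp
    rw [inner_neg_left, ← inner_conj_symm, ← inner_conj_symm b]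
    simp [hp]
  obtain ⟨b', rfl, hb'⟩ := (mem_graph_iff _).mp hab
  have hxy := h b'
  rw [hb', inner_neg_left] at hxy
  rw [WithLp.prod_inner_apply]
  dsimp only
  rw [← inner_conj_symm x, ← inner_conj_symm y, ← hxy, RingHom.map_neg, add_neg_cancel]

variable {K : Submodule 𝕜 F} [K.HasOrthogonalProjection] {c : ℝ}

theorem norm_inner_le_of_adjoint_bound (hT : Dense (T.domain : Set E))
    (hTK : ∀ p : T.domain, T p ∈ K) (hest : ∀ v : T†.domain, (v : F) ∈ K → ‖(v : F)‖ ≤ c * ‖T† v‖)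
    {y : F} (hy : y ∈ K) (b : T†.domain) : ‖⟪y, (b : F)⟫_𝕜‖ ≤ c * ‖y‖ * ‖T† b‖ := by
  obtain ⟨b₁, hb₁, b₂, hb₂, hb⟩ := K.exists_add_mem_mem_orthogonal (b : F)
  have hb₂_graph : (b₂, 0) ∈ T†.graph := mem_adjoint_graph_of_forall_inner hT fun p => by
    rw [inner_zero_left, Submodule.inner_left_of_mem_orthogonal (hTK p) hb₂]
  have hb₁_graph : (b₁, T† b) ∈ T†.graph := by
    simpa [hb] using sub_mem (T†.mem_graph b) hb₂_graph
  obtain ⟨b₁, rfl, hTb₁ : T† b₁ = T† b⟩ := (mem_graph_iff _).mp hb₁_graph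
  calc ‖⟪y, (b : F)⟫_𝕜‖ = ‖⟪y, (b₁ : F)⟫_𝕜‖ := by
        rw [hb, inner_add_right, Submodule.inner_right_of_mem_orthogonal hy hb₂, add_zero]
    _ ≤ ‖y‖ * ‖(b₁ : F)‖ := norm_inner_le_norm _ _
    _ ≤ ‖y‖ * (c * ‖T† b‖) := by
        gcongr
        rw [← hTb₁]
        exact hest b₁ hb₁
    _ = c * ‖y‖ * ‖T† b‖ := by ring

theorem subset_ranSet_of_adjoint_bound [CompleteSpace F] (hT : Dense (T.domain : Set E))
    (hTc : T.IsClosed)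
    (hTK : ∀ p : T.domain, T p ∈ K) (hest : ∀ v : T†.domain, (v : F) ∈ K → ‖(v : F)‖ ≤ c * ‖T† v‖) :
    (K : Set F) ⊆ T.ranSet := by
  intro y hy
  obtain ⟨g, hg⟩ := T†.toFun.exists_strongDual_comp_eq_of_norm_le
    (innerₛₗ 𝕜 y ∘ₗ T†.domain.subtype) _ (norm_inner_le_of_adjoint_bound hT hTK hest hy)
  set x := (InnerProductSpace.toDual 𝕜 E).symm g
  have hx : ∀ b : T†.domain, ⟪T† b, x⟫_𝕜 = ⟪(b : F), y⟫_𝕜 := fun b => by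
    rw [← inner_conj_symm, InnerProductSpace.toDual_symm_apply]
    exact (congrArg _ (hg b)).trans (inner_conj_symm _ _)
  obtain ⟨p, -, hp⟩ := (mem_graph_iff _).mp (mem_graph_of_forall_inner_adjoint hT hTc hx)
  exact ⟨p, hp⟩

end Adjoint

end LinearPMap

theorem stmt10_general {H₀ H H₂ : Type*}
    [NormedAddCommGroup H₀] [InnerProductSpace ℂ H₀] [CompleteSpace H₀]
    [NormedAddCommGroup H] [InnerProductSpace ℂ H] [CompleteSpace H]
    [NormedAddCommGroup H₂] [InnerProductSpace ℂ H₂]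
    (T : H₀ →ₗ.[ℂ] H) (S : H →ₗ.[ℂ] H₂)
    (hTdense : Dense (T.domain : Set H₀)) (hTclosed : T.IsClosed)
    (hSclosed : S.IsClosed)
    (hRZ : T.ranSet ⊆ S.kerSet)
    (hest : ∃ c > (0 : ℝ), ∀ (v : H) (hv : v ∈ T.adjoint.domain), v ∈ S.kerSet →
      ‖v‖ ≤ c * ‖T.adjoint ⟨v, hv⟩‖) :
    S.kerSet = T.ranSet ∧ IsClosed T.ranSet ∧ S.kerSet ⊆ T.ranSet := by
  obtain ⟨c, -, hc⟩ := hest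
  have hker : IsClosed (S.ker : Set H) := S.coe_ker ▸ hSclosed.isClosed_kerSet
  have : CompleteSpace S.ker := hker.completeSpace_coe
  have hsub : S.kerSet ⊆ T.ranSet := S.coe_ker ▸
    subset_ranSet_of_adjoint_bound hTdense hTclosed (fun p => mem_ker.mpr (hRZ ⟨p, rfl⟩))
      fun v hv => hc v v.2 (mem_ker.mp hv)
  have heq : S.kerSet = T.ranSet := hsub.antisymm hRZ
  exact ⟨heq, heq ▸ hSclosed.isClosed_kerSet, hsub⟩

/-- Let `T : H₀ → H` and `S : H → H₂` be densely defined closed operators with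
`R(T) ⊆ Z(S)`.  If there is `c > 0` with `‖v‖ ≤ c‖T*v‖` for all `v ∈ D(T*) ∩ Z(S)`, then
`Z(S) = R(T)`; in particular `R(T)` is closed and every kernel element of `S` is in `R(T)`. -/
theorem stmt10 {H₀ H H₂ : Type*}
    [NormedAddCommGroup H₀] [InnerProductSpace ℂ H₀] [CompleteSpace H₀]
    [NormedAddCommGroup H] [InnerProductSpace ℂ H] [CompleteSpace H]
    [NormedAddCommGroup H₂] [InnerProductSpace ℂ H₂] [CompleteSpace H₂]
    (T : H₀ →ₗ.[ℂ] H) (S : H →ₗ.[ℂ] H₂)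
    (hTdense : Dense (T.domain : Set H₀)) (hTclosed : T.IsClosed)
    (hSdense : Dense (S.domain : Set H)) (hSclosed : S.IsClosed)
    (hRZ : T.ranSet ⊆ S.kerSet)
    (hest : ∃ c > (0 : ℝ), ∀ (v : H) (hv : v ∈ T.adjoint.domain), v ∈ S.kerSet →
      ‖v‖ ≤ c * ‖T.adjoint ⟨v, hv⟩‖) :
    S.kerSet = T.ranSet ∧ IsClosed T.ranSet ∧ S.kerSet ⊆ T.ranSet :=
  stmt10_general T S hTdense hTclosed hSclosed hRZ hest
end

section
/- Let Φ ∈ C²(ℝⁿ, ℝ) be uniformly strictly convex, i.e. there is c₀ > 0 such that zᵀ Φ''(x) conj(z) ≥ c₀|z|² for all x ∈ ℝⁿ and z ∈ ℂⁿ. Then for every v = (v₁, …, vₙ) ∈ C₀^∞(ℝⁿ, ℂⁿ) one has the identity and lower bound: ∫_{ℝⁿ} Re⟨(−Δ + ∇Φ·∇)v(x) + Φ''(x)v(x), v(x)⟩_{ℂⁿ} e^{-Φ(x)} dx = Σ_{j,k=1}^{n} ∫_{ℝⁿ} |∂_j v_k(x)|² e^{-Φ(x)} dx + ∫_{ℝⁿ}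 ⟨Φ''(x)v(x), v(x)⟩_{ℂⁿ} e^{-Φ(x)} dx ≥ c₀ ∫_{ℝⁿ} |v(x)|² e^{-Φ(x)} dx, where (−Δ + ∇Φ·∇) acts componentwise on v. -/
open MeasureTheory

/-- The Hessian matrix of `Φ : ℝⁿ → ℝ` at `x`. -/
noncomputable def hessianMat {n : ℕ} (Φ : EuclideanSpace ℝ (Fin n) → ℝ)
    (x : EuclideanSpace ℝ (Fin n)) : Matrix (Fin n) (Fin n) ℝ :=
  Matrix.of fun i j =>
    iteratedFDeriv ℝ 2 Φ x ![EuclideanSpace.single i 1, EuclideanSpace.single j 1]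

/-- The operator `(−Δ + ∇Φ·∇)` applied to a scalar function `u`. -/
noncomputable def driftLap {n : ℕ} (Φ : EuclideanSpace ℝ (Fin n) → ℝ)
    (u : EuclideanSpace ℝ (Fin n) → ℂ) (x : EuclideanSpace ℝ (Fin n)) : ℂ :=
  -(∑ j, iteratedFDeriv ℝ 2 u x ![EuclideanSpace.single j 1, EuclideanSpace.single j 1]) +
    ∑ j, ((fderiv ℝ Φ x (EuclideanSpace.single j 1) : ℝ) : ℂ) *
      fderiv ℝ u x (EuclideanSpace.single j 1)

/-- `(Φ''(x) v(x))_k`, the `k`-th component of the Hessian acting on a vector field `v`. -/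
noncomputable def hessApply {n : ℕ} (Φ : EuclideanSpace ℝ (Fin n) → ℝ)
    (v : EuclideanSpace ℝ (Fin n) → Fin n → ℂ) (x : EuclideanSpace ℝ (Fin n)) (k : Fin n) : ℂ :=
  ∑ l, ((hessianMat Φ x k l : ℝ) : ℂ) * v x l

lemma integral_dderiv_eq_zero {n : ℕ} (h : EuclideanSpace ℝ (Fin n) → ℂ)
    (hh : ContDiff ℝ 1 h) (hc : HasCompactSupport h) (w : EuclideanSpace ℝ (Fin n)) :
    ∫ x, fderiv ℝ h x w = 0 := by
  have hint : Integrable (fun x => fderiv ℝ h x w) volume := by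
    refine Continuous.integrable_of_hasCompactSupport ?_ ?_
    · exact (ContinuousLinearMap.apply ℝ ℂ w).continuous.comp (hh.continuous_fderiv one_ne_zero)
    · exact (hc.fderiv ℝ).comp_left (g := fun L : _ →L[ℝ] ℂ => L w) rfl
  have hinth : Integrable h volume := hh.continuous.integrable_of_hasCompactSupport hc
  have key := integral_bilinear_hasLineDerivAt_right_eq_neg_left_of_integrable
    (μ := (volume : Measure (EuclideanSpace ℝ (Fin n))))
    (f := fun _ => (1:ℝ)) (f' := fun _ => 0)
    (g := h) (g' := fun x => fderiv ℝ h x w) (v := w)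
    (B := ContinuousLinearMap.lsmul ℝ ℝ)
    (by simpa using (integrable_zero _ _ _ : Integrable (fun _ : EuclideanSpace ℝ (Fin n) => (0:ℂ)) volume))
    (by simpa using hint) (by simpa using hinth)
    (fun x _ => by simpa using (hasFDerivAt_const (1:ℝ) x).hasLineDerivAt w)
    (fun x _ => ((hh.differentiable one_ne_zero x).hasFDerivAt.hasLineDerivAt w))
  simpa using key

lemma scalar_ibp {n : ℕ} (Φ : EuclideanSpace ℝ (Fin n) → ℝ) (hΦ : ContDiff ℝ 2 Φ)
    (u : EuclideanSpace ℝ (Fin n) → ℂ) (hu : ContDiff ℝ 2 u) (hc : HasCompactSupport u) :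
    ∫ x, (driftLap Φ u x * (starRingEnd ℂ) (u x)).re * Real.exp (-Φ x) =
      ∑ j, ∫ x, ‖fderiv ℝ u x (EuclideanSpace.single j 1)‖ ^ 2 * Real.exp (-Φ x) := by
  set e : Fin n → EuclideanSpace ℝ (Fin n) := fun j => EuclideanSpace.single j 1 with he
  set G : Fin n → EuclideanSpace ℝ (Fin n) → ℂ := fun j x =>
    ((Real.exp (-Φ x) : ℝ) : ℂ) * fderiv ℝ u x (e j) * (starRingEnd ℂ) (u x) with hGdef
  have h11 : (1:WithTop ℕ∞) + 1 ≤ 2 := by norm_num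
  have hfu : ContDiff ℝ 1 (fderiv ℝ u) := hu.fderiv_right h11
  have hG : ∀ j x, HasFDerivAt (G j)
      ((((Real.exp (-Φ x) : ℝ) : ℂ) * fderiv ℝ u x (e j)) •
          (Complex.conjCLE.toContinuousLinearMap.comp (fderiv ℝ u x)) +
        ((starRingEnd ℂ) (u x)) •
          ((((Real.exp (-Φ x) : ℝ) : ℂ)) • ((ContinuousLinearMap.apply ℝ ℂ (e j)).comp
              (fderiv ℝ (fderiv ℝ u) x)) +
            (fderiv ℝ u x (e j)) • (Complex.ofRealCLM.comp
              (Real.exp (-Φ x) • -fderiv ℝ Φ x)))) x := by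
    intro j x
    have h1 : HasFDerivAt (fun y => ((Real.exp (-Φ y) : ℝ) : ℂ))
        (Complex.ofRealCLM.comp (Real.exp (-Φ x) • -fderiv ℝ Φ x)) x :=
      Complex.ofRealCLM.hasFDerivAt.comp x
        (((hΦ.differentiable two_ne_zero) x).hasFDerivAt.neg.exp)
    have h2 : HasFDerivAt (fun y => fderiv ℝ u y (e j))
        ((ContinuousLinearMap.apply ℝ ℂ (e j)).comp (fderiv ℝ (fderiv ℝ u) x)) x :=
      (ContinuousLinearMap.apply ℝ ℂ (e j)).hasFDerivAt.comp x
        ((hfu.differentiable one_ne_zero) x).hasFDerivAt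
    have h3 : HasFDerivAt (fun y => (starRingEnd ℂ) (u y))
        (Complex.conjCLE.toContinuousLinearMap.comp (fderiv ℝ u x)) x :=
      Complex.conjCLE.toContinuousLinearMap.hasFDerivAt.comp x
        ((hu.differentiable two_ne_zero) x).hasFDerivAt
    exact (h1.mul h2).mul h3
  have hGval : ∀ j x, fderiv ℝ (G j) x (e j) =
      ((Real.exp (-Φ x) : ℝ) : ℂ) * fderiv ℝ u x (e j) *
          (starRingEnd ℂ) (fderiv ℝ u x (e j)) +
        (starRingEnd ℂ) (u x) *
          (((Real.exp (-Φ x) : ℝ) : ℂ) * fderiv ℝ (fderiv ℝ u) x (e j) (e j) +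
            fderiv ℝ u x (e j) * ((Real.exp (-Φ x) * -(fderiv ℝ Φ x (e j)) : ℝ) : ℂ)) := by
    intro j x
    rw [(hG j x).fderiv]
    simp [mul_comm]
    ring
  -- pointwise identity
  have ptR : ∀ x, (driftLap Φ u x * (starRingEnd ℂ) (u x)).re * Real.exp (-Φ x)
      = ∑ j, (‖fderiv ℝ u x (e j)‖ ^ 2 * Real.exp (-Φ x) - (fderiv ℝ (G j) x (e j)).re) := by
    intro x
    have hC : driftLap Φ u x * (starRingEnd ℂ) (u x) * ((Real.exp (-Φ x) : ℝ) : ℂ)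
        = ∑ j, (((‖fderiv ℝ u x (e j)‖ ^ 2 * Real.exp (-Φ x) : ℝ) : ℂ)
            - fderiv ℝ (G j) x (e j)) := by
      have hterm : ∀ j, (((‖fderiv ℝ u x (e j)‖ ^ 2 * Real.exp (-Φ x) : ℝ) : ℂ)
            - fderiv ℝ (G j) x (e j))
          = (((fderiv ℝ Φ x (e j) : ℝ) : ℂ) * fderiv ℝ u x (e j)
              - fderiv ℝ (fderiv ℝ u) x (e j) (e j)) * (starRingEnd ℂ) (u x)
              * ((Real.exp (-Φ x) : ℝ) : ℂ) := by
        intro j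
        rw [hGval]
        push_cast
        rw [← Complex.mul_conj' (fderiv ℝ u x (e j))]
        ring
      rw [Finset.sum_congr rfl fun j _ => hterm j]
      simp only [driftLap, iteratedFDeriv_two_apply, Matrix.cons_val_zero, Matrix.cons_val_one,
        Matrix.head_cons]
      rw [← Finset.sum_mul, ← Finset.sum_mul, Finset.sum_sub_distrib]
      ring
    have hre : ∀ (z : ℂ) (r : ℝ), (z * (r:ℂ)).re = z.re * r := fun z r => by simp
    calc (driftLap Φ u x * (starRingEnd ℂ) (u x)).re * Real.exp (-Φ x)
        = (driftLap Φ u x * (starRingEnd ℂ) (u x) * ((Real.exp (-Φ x) : ℝ) : ℂ)).re :=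
          (hre _ _).symm
      _ = (∑ j, (((‖fderiv ℝ u x (e j)‖ ^ 2 * Real.exp (-Φ x) : ℝ) : ℂ)
            - fderiv ℝ (G j) x (e j))).re := by rw [hC]
      _ = ∑ j, (‖fderiv ℝ u x (e j)‖ ^ 2 * Real.exp (-Φ x) - (fderiv ℝ (G j) x (e j)).re) := by
          rw [Complex.re_sum]
          exact Finset.sum_congr rfl fun j _ => by rw [Complex.sub_re, Complex.ofReal_re]
  -- integrability
  have hexp_cont : Continuous fun x => Real.exp (-Φ x) :=
    Real.continuous_exp.comp (hΦ.continuous.neg)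
  have hfu_cont : ∀ j, Continuous fun x => fderiv ℝ u x (e j) := fun j =>
    (ContinuousLinearMap.apply ℝ ℂ (e j)).continuous.comp (hfu.continuous)
  have hfu_supp : ∀ j, HasCompactSupport fun x => fderiv ℝ u x (e j) := fun j =>
    (hc.fderiv ℝ).comp_left (g := fun L : _ →L[ℝ] ℂ => L (e j)) rfl
  have int1 : ∀ j, Integrable (fun x => ‖fderiv ℝ u x (e j)‖ ^ 2 * Real.exp (-Φ x)) volume := by
    intro j
    refine Continuous.integrable_of_hasCompactSupport
      (((hfu_cont j).norm.pow 2).mul hexp_cont) ?_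
    refine ((hfu_supp j).comp_left (g := fun z : ℂ => ‖z‖ ^ 2) (by simp)).mul_right
  have hG1 : ∀ j, ContDiff ℝ 1 (G j) := by
    intro j
    refine ContDiff.mul (ContDiff.mul ?_ ?_) ?_
    · exact Complex.ofRealCLM.contDiff.comp
        ((Real.contDiff_exp.of_le le_top).comp (hΦ.of_le one_le_two).neg)
    · exact hfu.clm_apply contDiff_const
    · exact Complex.conjCLE.toContinuousLinearMap.contDiff.comp (hu.of_le one_le_two)
  have hGsupp : ∀ j, HasCompactSupport (G j) := fun j =>
    (hc.comp_left (g := starRingEnd ℂ) (map_zero _)).mul_left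
  have int2 : ∀ j, Integrable (fun x => fderiv ℝ (G j) x (e j)) volume := by
    intro j
    refine Continuous.integrable_of_hasCompactSupport
      ((ContinuousLinearMap.apply ℝ ℂ (e j)).continuous.comp ((hG1 j).continuous_fderiv one_ne_zero)) ?_
    exact ((hGsupp j).fderiv ℝ).comp_left (g := fun L : _ →L[ℝ] ℂ => L (e j)) rfl
  have int2re : ∀ j, Integrable (fun x => (fderiv ℝ (G j) x (e j)).re) volume := fun j =>
    (int2 j).re
  have hzero : ∀ j, ∫ x, (fderiv ℝ (G j) x (e j)).re = 0 := by
    intro j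
    have := Complex.reCLM.integral_comp_comm (int2 j)
    rw [integral_dderiv_eq_zero (G j) (hG1 j) (hGsupp j) (e j)] at this
    simpa using this
  calc ∫ x, (driftLap Φ u x * (starRingEnd ℂ) (u x)).re * Real.exp (-Φ x)
      = ∫ x, ∑ j, (‖fderiv ℝ u x (e j)‖ ^ 2 * Real.exp (-Φ x)
          - (fderiv ℝ (G j) x (e j)).re) := by
        exact integral_congr_ae (Filter.Eventually.of_forall ptR)
    _ = ∑ j, ∫ x, (‖fderiv ℝ u x (e j)‖ ^ 2 * Real.exp (-Φ x)
          - (fderiv ℝ (G j) x (e j)).re) := by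
        exact integral_finset_sum _ fun j _ => (int1 j).sub (int2re j)
    _ = ∑ j, ∫ x, ‖fderiv ℝ u x (e j)‖ ^ 2 * Real.exp (-Φ x) := by
        refine Finset.sum_congr rfl fun j _ => ?_
        rw [integral_sub (int1 j) (int2re j), hzero j, sub_zero]

/-- for uniformly strictly convex `Φ ∈ C²` and `v ∈ C₀^∞(ℝⁿ, ℂⁿ)`, the identity
`∫ Re⟨(−Δ+∇Φ·∇)v + Φ''v, v⟩ e^{-Φ} = Σ_{j,k} ∫ |∂_j v_k|² e^{-Φ} + ∫ ⟨Φ''v, v⟩ e^{-Φ}`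
holds, together with the lower bound by `c₀ ∫ |v|² e^{-Φ}`. -/
theorem stmt12 {n : ℕ} (Φ : EuclideanSpace ℝ (Fin n) → ℝ) (hΦ : ContDiff ℝ 2 Φ)
    (c₀ : ℝ) (hc₀ : 0 < c₀)
    (hconv : ∀ (x : EuclideanSpace ℝ (Fin n)) (z : Fin n → ℂ),
      c₀ * ∑ j, ‖z j‖ ^ 2 ≤
        (∑ j, ∑ k, ((hessianMat Φ x j k : ℝ) : ℂ) * z j * (starRingEnd ℂ) (z k)).re)
    (v : EuclideanSpace ℝ (Fin n) → Fin n → ℂ)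
    (hv : ContDiff ℝ (⊤ : ℕ∞) v) (hsupp : HasCompactSupport v) :
    (∫ x, (∑ k, (driftLap Φ (fun y => v y k) x + hessApply Φ v x k) *
        (starRingEnd ℂ) (v x k)).re * Real.exp (-Φ x) =
      (∑ j, ∑ k, ∫ x, ‖fderiv ℝ (fun y => v y k) x (EuclideanSpace.single j 1)‖ ^ 2 *
        Real.exp (-Φ x)) +
      ∫ x, (∑ k, hessApply Φ v x k * (starRingEnd ℂ) (v x k)).re * Real.exp (-Φ x)) ∧
    c₀ * ∫ x, (∑ k, ‖v x k‖ ^ 2) * Real.exp (-Φ x) ≤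
      (∑ j, ∑ k, ∫ x, ‖fderiv ℝ (fun y => v y k) x (EuclideanSpace.single j 1)‖ ^ 2 *
        Real.exp (-Φ x)) +
      ∫ x, (∑ k, hessApply Φ v x k * (starRingEnd ℂ) (v x k)).re * Real.exp (-Φ x) := by
  have h11 : (1:WithTop ℕ∞) + 1 ≤ 2 := by norm_num
  set e : Fin n → EuclideanSpace ℝ (Fin n) := fun j => EuclideanSpace.single j 1 with he
  have hvk : ∀ k, ContDiff ℝ 2 fun y => v y k := fun k =>
    ((contDiff_pi.1 hv) k).of_le (WithTop.coe_le_coe.mpr le_top)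
  have hsk : ∀ k, HasCompactSupport fun y => v y k := fun k =>
    hsupp.comp_left (g := fun w : Fin n → ℂ => w k) rfl
  have hvc : ∀ k, Continuous fun x => v x k := fun k => (hvk k).continuous
  have hexp_cont : Continuous fun x => Real.exp (-Φ x) :=
    Real.continuous_exp.comp (hΦ.continuous.neg)
  -- compact-support helper
  have hms : ∀ (F : EuclideanSpace ℝ (Fin n) → ℝ), (∀ x, v x = 0 → F x = 0) →
      HasCompactSupport F := by
    intro F hF
    apply hsupp.mono
    intro x hx
    simp only [Function.mem_support] at hx ⊢
    exact fun h0 => hx (hF x h0)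
  -- continuity of driftLap
  have hcdl : ∀ k, Continuous (driftLap Φ (fun y => v y k)) := by
    intro k
    have hc2 : Continuous (fderiv ℝ (fderiv ℝ (fun y => v y k))) :=
      ((hvk k).fderiv_right h11).continuous_fderiv one_ne_zero
    have hc1 : Continuous (fderiv ℝ (fun y => v y k)) :=
      ((hvk k).fderiv_right h11).continuous
    have hΦ1 : Continuous (fderiv ℝ Φ) := hΦ.continuous_fderiv two_ne_zero
    show Continuous fun x =>
      -(∑ j, iteratedFDeriv ℝ 2 (fun y => v y k) x ![e j, e j]) +
        ∑ j, ((fderiv ℝ Φ x (e j) : ℝ) : ℂ) * fderiv ℝ (fun y => v y k) x (e j)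
    simp only [iteratedFDeriv_two_apply, Matrix.cons_val_zero, Matrix.cons_val_one,
      Matrix.head_cons]
    refine Continuous.add (Continuous.neg ?_) ?_
    · exact continuous_finset_sum _ fun j _ =>
        (ContinuousLinearMap.apply ℝ ℂ (e j)).continuous.comp
          ((ContinuousLinearMap.apply ℝ (_ →L[ℝ] ℂ) (e j)).continuous.comp hc2)
    · exact continuous_finset_sum _ fun j _ =>
        ((Complex.continuous_ofReal.comp
          ((ContinuousLinearMap.apply ℝ ℝ (e j)).continuous.comp hΦ1)).mul
          ((ContinuousLinearMap.apply ℝ ℂ (e j)).continuous.comp hc1))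
  -- continuity of hessApply
  have hches : ∀ k, Continuous fun x => hessApply Φ v x k := by
    intro k
    have hΦ2 : Continuous (fderiv ℝ (fderiv ℝ Φ)) :=
      (hΦ.fderiv_right h11).continuous_fderiv one_ne_zero
    simp only [hessApply, hessianMat, Matrix.of_apply, iteratedFDeriv_two_apply,
      Matrix.cons_val_zero, Matrix.cons_val_one, Matrix.head_cons]
    exact continuous_finset_sum _ fun l _ =>
      ((Complex.continuous_ofReal.comp
        ((ContinuousLinearMap.apply ℝ ℝ (e l)).continuous.comp
          ((ContinuousLinearMap.apply ℝ (_ →L[ℝ] ℝ) (e k)).continuous.comp hΦ2))).mul (hvc l))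
  -- integrability of pieces
  have intA : ∀ k, Integrable
      (fun x => (driftLap Φ (fun y => v y k) x * (starRingEnd ℂ) (v x k)).re *
        Real.exp (-Φ x)) volume := by
    intro k
    refine Continuous.integrable_of_hasCompactSupport
      ((Complex.continuous_re.comp ((hcdl k).mul
        (Complex.conjCLE.continuous.comp (hvc k)))).mul hexp_cont) ?_
    refine hms _ fun x h0 => ?_
    have : v x k = 0 := congrFun h0 k
    simp [this]
  have intB : Integrable
      (fun x => (∑ k, hessApply Φ v x k * (starRingEnd ℂ) (v x k)).re *
        Real.exp (-Φ x)) volume := by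
    refine Continuous.integrable_of_hasCompactSupport
      ((Complex.continuous_re.comp (continuous_finset_sum _ fun k _ =>
        (hches k).mul (Complex.conjCLE.continuous.comp (hvc k)))).mul hexp_cont) ?_
    refine hms _ fun x h0 => ?_
    have : ∀ k, v x k = 0 := fun k => congrFun h0 k
    simp [this]
  have intSum : Integrable (fun x => (∑ k, ‖v x k‖ ^ 2) * Real.exp (-Φ x)) volume := by
    refine Continuous.integrable_of_hasCompactSupport
      ((continuous_finset_sum _ fun k _ => ((hvc k).norm.pow 2)).mul hexp_cont) ?_
    refine hms _ fun x h0 => ?_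
    have : ∀ k, v x k = 0 := fun k => congrFun h0 k
    simp [this]
  -- the identity
  have hid : ∫ x, (∑ k, (driftLap Φ (fun y => v y k) x + hessApply Φ v x k) *
        (starRingEnd ℂ) (v x k)).re * Real.exp (-Φ x) =
      (∑ j, ∑ k, ∫ x, ‖fderiv ℝ (fun y => v y k) x (e j)‖ ^ 2 * Real.exp (-Φ x)) +
      ∫ x, (∑ k, hessApply Φ v x k * (starRingEnd ℂ) (v x k)).re * Real.exp (-Φ x) := by
    have split : ∀ x, (∑ k, (driftLap Φ (fun y => v y k) x + hessApply Φ v x k) *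
          (starRingEnd ℂ) (v x k)).re * Real.exp (-Φ x) =
        (∑ k, (driftLap Φ (fun y => v y k) x * (starRingEnd ℂ) (v x k)).re *
          Real.exp (-Φ x)) +
        (∑ k, hessApply Φ v x k * (starRingEnd ℂ) (v x k)).re * Real.exp (-Φ x) := by
      intro x
      simp only [add_mul, Finset.sum_add_distrib, Complex.add_re, Complex.re_sum,
        Finset.sum_mul]
      try ring
    calc ∫ x, (∑ k, (driftLap Φ (fun y => v y k) x + hessApply Φ v x k) *
          (starRingEnd ℂ) (v x k)).re * Real.exp (-Φ x)
        = ∫ x, ((∑ k, (driftLap Φ (fun y => v y k) x * (starRingEnd ℂ) (v x k)).re *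
            Real.exp (-Φ x)) +
          (∑ k, hessApply Φ v x k * (starRingEnd ℂ) (v x k)).re * Real.exp (-Φ x)) :=
          integral_congr_ae (Filter.Eventually.of_forall split)
      _ = (∫ x, ∑ k, (driftLap Φ (fun y => v y k) x * (starRingEnd ℂ) (v x k)).re *
            Real.exp (-Φ x)) +
          ∫ x, (∑ k, hessApply Φ v x k * (starRingEnd ℂ) (v x k)).re * Real.exp (-Φ x) :=
          integral_add (integrable_finset_sum _ fun k _ => intA k) intB
      _ = (∑ k, ∫ x, (driftLap Φ (fun y => v y k) x * (starRingEnd ℂ) (v x k)).re *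
            Real.exp (-Φ x)) +
          ∫ x, (∑ k, hessApply Φ v x k * (starRingEnd ℂ) (v x k)).re * Real.exp (-Φ x) := by
          rw [integral_finset_sum _ fun k _ => intA k]
      _ = (∑ k, ∑ j, ∫ x, ‖fderiv ℝ (fun y => v y k) x (e j)‖ ^ 2 * Real.exp (-Φ x)) +
          ∫ x, (∑ k, hessApply Φ v x k * (starRingEnd ℂ) (v x k)).re * Real.exp (-Φ x) := by
          rw [Finset.sum_congr rfl fun k _ => scalar_ibp Φ hΦ _ (hvk k) (hsk k)]
      _ = (∑ j, ∑ k, ∫ x, ‖fderiv ℝ (fun y => v y k) x (e j)‖ ^ 2 * Real.exp (-Φ x)) +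
          ∫ x, (∑ k, hessApply Φ v x k * (starRingEnd ℂ) (v x k)).re * Real.exp (-Φ x) := by
          rw [Finset.sum_comm]
  refine ⟨hid, ?_⟩
  -- the inequality
  have ptIneq : ∀ x, c₀ * ((∑ k, ‖v x k‖ ^ 2) * Real.exp (-Φ x)) ≤
      (∑ k, hessApply Φ v x k * (starRingEnd ℂ) (v x k)).re * Real.exp (-Φ x) := by
    intro x
    have h := hconv x (fun j => (starRingEnd ℂ) (v x j))
    have hnorm : ∀ j, ‖(starRingEnd ℂ) (v x j)‖ = ‖v x j‖ := fun j => RCLike.norm_conj _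
    have heq : (∑ j, ∑ k, ((hessianMat Φ x j k : ℝ) : ℂ) * (starRingEnd ℂ) (v x j) *
          (starRingEnd ℂ) ((starRingEnd ℂ) (v x k))) =
        ∑ k, hessApply Φ v x k * (starRingEnd ℂ) (v x k) := by
      simp only [hessApply, Finset.sum_mul, Complex.conj_conj]
      exact Finset.sum_congr rfl fun j _ => Finset.sum_congr rfl fun k _ => by ring
    rw [heq] at h
    simp only [hnorm] at h
    have := mul_le_mul_of_nonneg_right h (Real.exp_nonneg (-Φ x))
    linarith [this]
  have hnonneg : 0 ≤ ∑ j, ∑ k, ∫ x, ‖fderiv ℝ (fun y => v y k) x (e j)‖ ^ 2 *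
      Real.exp (-Φ x) := by
    refine Finset.sum_nonneg fun j _ => Finset.sum_nonneg fun k _ => ?_
    refine integral_nonneg fun x => ?_
    positivity
  calc c₀ * ∫ x, (∑ k, ‖v x k‖ ^ 2) * Real.exp (-Φ x)
      = ∫ x, c₀ * ((∑ k, ‖v x k‖ ^ 2) * Real.exp (-Φ x)) := (integral_const_mul _ _).symm
    _ ≤ ∫ x, (∑ k, hessApply Φ v x k * (starRingEnd ℂ) (v x k)).re * Real.exp (-Φ x) :=
        integral_mono (intSum.const_mul c₀) intB ptIneq
    _ ≤ (∑ j, ∑ k, ∫ x, ‖fderiv ℝ (fun y => v y k) x (e j)‖ ^ 2 * Real.exp (-Φ x)) +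
        ∫ x, (∑ k, hessApply Φ v x k * (starRingEnd ℂ) (v x k)).re * Real.exp (-Φ x) :=
        le_add_of_nonneg_left hnonneg
end

section
/- Let Φ ∈ C²(ℝⁿ, ℝ) and let ε > 0. Then for every u ∈ C₀^∞(ℝⁿ), ∫_{ℝⁿ} (|∇Φ(x)|² − (1+ε) ΔΦ(x)) |u(x)|² e^{-Φ(x)} dx ≤ (2 + ε + ε⁻¹) Σ_{j=1}^{n} ∫_{ℝⁿ} |∂_j u(x)|² e^{-Φ(x)} dx. -/
open MeasureTheory

private lemma normsq_eq (z : ℂ) : ‖z‖ ^ 2 = z.re ^ 2 + z.im ^ 2 := by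
  simp [Complex.sq_norm, Complex.normSq_apply]; ring

/-- integrability of `c * k` for continuous `c` and compactly supported continuous `k`. -/
private lemma int_helper {n : ℕ} {c k : EuclideanSpace ℝ (Fin n) → ℝ} (hc : Continuous c)
    (hk : Continuous k) (hks : HasCompactSupport k) :
    Integrable (fun x => c x * k x) :=
  (hc.mul hk).integrable_of_hasCompactSupport (hks.mul_left)

private lemma stmt13_aux {n : ℕ} (Φ : EuclideanSpace ℝ (Fin n) → ℝ) (hΦ : ContDiff ℝ 2 Φ)
    (ε : ℝ) (hε : 0 < ε)
    (u : EuclideanSpace ℝ (Fin n) → ℂ) (hu : ContDiff ℝ (⊤ : ℕ∞) u) (hsupp : HasCompactSupport u)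
    (v : EuclideanSpace ℝ (Fin n)) :
    ∫ x, ((fderiv ℝ Φ x v) ^ 2 - (1 + ε) * fderiv ℝ (fun y => fderiv ℝ Φ y v) x v)
        * ‖u x‖ ^ 2 * Real.exp (-Φ x)
      ≤ (2 + ε + ε⁻¹) * ∫ x, ‖fderiv ℝ u x v‖ ^ 2 * Real.exp (-Φ x) := by
  classical
  -- smoothness facts
  have hΦ1 : ContDiff ℝ 1 (fderiv ℝ Φ) := hΦ.fderiv_right (by norm_num)
  have ha : ContDiff ℝ 1 (fun x => fderiv ℝ Φ x v) :=
    (ContinuousLinearMap.apply ℝ ℝ v).contDiff.comp hΦ1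
  have hbcont : Continuous (fun x => fderiv ℝ (fun y => fderiv ℝ Φ y v) x v) :=
    (ContinuousLinearMap.apply ℝ ℝ v).continuous.comp (ha.continuous_fderiv one_ne_zero)
  have hec : ContDiff ℝ 1 (fun x => Real.exp (-Φ x)) :=
    Real.contDiff_exp.comp (hΦ.of_le one_le_two).neg
  have hu2 : ContDiff ℝ 2 u := hu.of_le (WithTop.coe_le_coe.mpr le_top)
  have hur : ContDiff ℝ 2 (fun x => (u x).re) := Complex.reCLM.contDiff.comp hu2
  have hui : ContDiff ℝ 2 (fun x => (u x).im) := Complex.imCLM.contDiff.comp hu2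
  have hgeq : (fun x : EuclideanSpace ℝ (Fin n) => ‖u x‖ ^ 2)
      = fun x => (u x).re ^ 2 + (u x).im ^ 2 := by
    funext x; exact normsq_eq (u x)
  have hgsm : ContDiff ℝ 2 (fun x : EuclideanSpace ℝ (Fin n) => ‖u x‖ ^ 2) := by
    rw [hgeq]; simp only [pow_two]; exact (hur.mul hur).add (hui.mul hui)
  -- derivative of f := a * e
  have hed : ∀ x, HasFDerivAt (fun x => Real.exp (-Φ x))
      (Real.exp (-Φ x) • (-(fderiv ℝ Φ x))) x := fun x =>
    ((hΦ.differentiable two_ne_zero x).hasFDerivAt.neg).exp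
  have hfd : ∀ x, HasFDerivAt (fun x => fderiv ℝ Φ x v * Real.exp (-Φ x))
      ((fderiv ℝ Φ x v) • (Real.exp (-Φ x) • (-(fderiv ℝ Φ x)))
        + Real.exp (-Φ x) • fderiv ℝ (fun y => fderiv ℝ Φ y v) x) x := fun x =>
    ((ha.differentiable one_ne_zero x).hasFDerivAt).mul (hed x)
  have key1 : ∀ x, fderiv ℝ (fun x => fderiv ℝ Φ x v * Real.exp (-Φ x)) x v
      = (fderiv ℝ (fun y => fderiv ℝ Φ y v) x v - (fderiv ℝ Φ x v) ^ 2)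
        * Real.exp (-Φ x) := by
    intro x
    rw [(hfd x).fderiv]
    simp only [ContinuousLinearMap.add_apply, ContinuousLinearMap.smul_apply,
      ContinuousLinearMap.neg_apply, smul_eq_mul]
    ring
  -- derivative of g = ‖u‖²
  have hgd : ∀ x, HasFDerivAt (fun x : EuclideanSpace ℝ (Fin n) => ‖u x‖ ^ 2)
      (((u x).re • Complex.reCLM.comp (fderiv ℝ u x)
          + (u x).re • Complex.reCLM.comp (fderiv ℝ u x))
        + ((u x).im • Complex.imCLM.comp (fderiv ℝ u x)
          + (u x).im • Complex.imCLM.comp (fderiv ℝ u x))) x := by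
    intro x
    rw [hgeq]
    have hud := ((hu.differentiable (by simp)) x).hasFDerivAt
    have hr := Complex.reCLM.hasFDerivAt.comp x hud
    have hi := Complex.imCLM.hasFDerivAt.comp x hud
    have := (hr.mul hr).add (hi.mul hi)
    have e : (fun x => (u x).re ^ 2 + (u x).im ^ 2) = ⇑Complex.reCLM ∘ u * ⇑Complex.reCLM ∘ u
        + ⇑Complex.imCLM ∘ u * ⇑Complex.imCLM ∘ u := by
      funext y; simp [pow_two]
    rw [e]; exact this
  have key2 : ∀ x, fderiv ℝ (fun x : EuclideanSpace ℝ (Fin n) => ‖u x‖ ^ 2) x v =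
      2 * ((u x).re * (fderiv ℝ u x v).re + (u x).im * (fderiv ℝ u x v).im) := by
    intro x
    rw [(hgd x).fderiv]
    simp only [ContinuousLinearMap.add_apply, ContinuousLinearMap.smul_apply,
      ContinuousLinearMap.coe_comp', Function.comp_apply, Complex.reCLM_apply,
      Complex.imCLM_apply, smul_eq_mul]
    ring
  -- compact support facts
  have hgc : HasCompactSupport (fun x : EuclideanSpace ℝ (Fin n) => ‖u x‖ ^ 2) :=
    HasCompactSupport.comp_left (g := fun z : ℂ => ‖z‖ ^ 2) hsupp (by simp)
  have hDc : HasCompactSupport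
      (fun x => fderiv ℝ (fun x : EuclideanSpace ℝ (Fin n) => ‖u x‖ ^ 2) x v) :=
    HasCompactSupport.comp_left
      (g := fun L : EuclideanSpace ℝ (Fin n) →L[ℝ] ℝ => L v) (hgc.fderiv (𝕜 := ℝ)) rfl
  have huvc : HasCompactSupport (fun x => ‖fderiv ℝ u x v‖ ^ 2) := by
    have h1 : HasCompactSupport (fun x => fderiv ℝ u x v) :=
      HasCompactSupport.comp_left
        (g := fun L : EuclideanSpace ℝ (Fin n) →L[ℝ] ℂ => L v) (hsupp.fderiv (𝕜 := ℝ)) rfl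
    exact HasCompactSupport.comp_left (g := fun z : ℂ => ‖z‖ ^ 2) h1 (by simp)
  -- continuity facts
  have hacont : Continuous (fun x => fderiv ℝ Φ x v) := ha.continuous
  have hecont : Continuous (fun x : EuclideanSpace ℝ (Fin n) => Real.exp (-Φ x)) :=
    hec.continuous
  have hgcont : Continuous (fun x : EuclideanSpace ℝ (Fin n) => ‖u x‖ ^ 2) := hgsm.continuous
  have hDcont : Continuous
      (fun x => fderiv ℝ (fun x : EuclideanSpace ℝ (Fin n) => ‖u x‖ ^ 2) x v) :=
    (ContinuousLinearMap.apply ℝ ℝ v).continuous.comp (hgsm.continuous_fderiv two_ne_zero)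
  have huvcont : Continuous (fun x => ‖fderiv ℝ u x v‖ ^ 2) :=
    (((ContinuousLinearMap.apply ℝ ℂ v).continuous.comp
      (hu.continuous_fderiv (by simp))).norm).pow 2
  -- integrability facts
  have I1 : Integrable (fun x =>
      ((fderiv ℝ Φ x v) ^ 2 - fderiv ℝ (fun y => fderiv ℝ Φ y v) x v)
        * ‖u x‖ ^ 2 * Real.exp (-Φ x)) := by
    have := int_helper (c := fun x =>
        ((fderiv ℝ Φ x v) ^ 2 - fderiv ℝ (fun y => fderiv ℝ Φ y v) x v) * Real.exp (-Φ x))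
      (k := fun x => ‖u x‖ ^ 2) (((hacont.pow 2).sub hbcont).mul hecont) hgcont hgc
    simpa [mul_right_comm] using this
  have I2 : Integrable (fun x => (fderiv ℝ Φ x v) ^ 2 * ‖u x‖ ^ 2 * Real.exp (-Φ x)) := by
    have := int_helper (c := fun x => (fderiv ℝ Φ x v) ^ 2 * Real.exp (-Φ x))
      (k := fun x => ‖u x‖ ^ 2) ((hacont.pow 2).mul hecont) hgcont hgc
    simpa [mul_right_comm] using this
  have I3 : Integrable (fun x => (fderiv ℝ Φ x v * Real.exp (-Φ x))
      * fderiv ℝ (fun x : EuclideanSpace ℝ (Fin n) => ‖u x‖ ^ 2) x v) :=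
    int_helper (hacont.mul hecont) hDcont hDc
  have I4 : Integrable (fun x => ‖fderiv ℝ u x v‖ ^ 2 * Real.exp (-Φ x)) := by
    have := int_helper (c := fun x : EuclideanSpace ℝ (Fin n) => Real.exp (-Φ x))
      (k := fun x => ‖fderiv ℝ u x v‖ ^ 2) hecont huvcont huvc
    simpa [mul_comm] using this
  -- integration by parts
  have IBP := integral_mul_fderiv_eq_neg_fderiv_mul_of_integrable (μ := volume)
    (f := fun x => fderiv ℝ Φ x v * Real.exp (-Φ x))
    (g := fun x : EuclideanSpace ℝ (Fin n) => ‖u x‖ ^ 2) (v := v)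
    (by
      have := int_helper (c := fun x =>
          (fderiv ℝ (fun y => fderiv ℝ Φ y v) x v - (fderiv ℝ Φ x v) ^ 2) * Real.exp (-Φ x))
        (k := fun x => ‖u x‖ ^ 2) ((hbcont.sub (hacont.pow 2)).mul hecont) hgcont hgc
      apply this.congr
      filter_upwards with x
      rw [key1 x])
    I3
    (int_helper (hacont.mul hecont) hgcont hgc)
    (fun x _ => ((ha.differentiable one_ne_zero x).mul (hec.differentiable one_ne_zero x)))
    (fun x _ => (hgsm.differentiable two_ne_zero x))
  have hIBP : ∫ x, (fderiv ℝ Φ x v * Real.exp (-Φ x))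
        * fderiv ℝ (fun x : EuclideanSpace ℝ (Fin n) => ‖u x‖ ^ 2) x v
      = ∫ x, ((fderiv ℝ Φ x v) ^ 2 - fderiv ℝ (fun y => fderiv ℝ Φ y v) x v)
          * ‖u x‖ ^ 2 * Real.exp (-Φ x) := by
    rw [IBP, ← integral_neg]
    congr 1
    funext x
    rw [key1 x]
    ring
  -- pointwise inequality
  have pointwise : ∀ x, (1 + ε) * ((fderiv ℝ Φ x v * Real.exp (-Φ x))
        * fderiv ℝ (fun x : EuclideanSpace ℝ (Fin n) => ‖u x‖ ^ 2) x v)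
      - ε * ((fderiv ℝ Φ x v) ^ 2 * ‖u x‖ ^ 2 * Real.exp (-Φ x))
      ≤ (2 + ε + ε⁻¹) * (‖fderiv ℝ u x v‖ ^ 2 * Real.exp (-Φ x)) := by
    intro x
    rw [key2 x, normsq_eq (u x), normsq_eq (fderiv ℝ u x v)]
    set A := fderiv ℝ Φ x v
    set p := (u x).re
    set q := (u x).im
    set r := (fderiv ℝ u x v).re
    set s := (fderiv ℝ u x v).im
    have hE : (0:ℝ) < Real.exp (-Φ x) := Real.exp_pos _
    have hinv : ε * ε⁻¹ = 1 := mul_inv_cancel₀ hε.ne'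
    have core : (1 + ε) * (A * (2 * (p * r + q * s))) - ε * (A ^ 2 * (p ^ 2 + q ^ 2))
        ≤ (2 + ε + ε⁻¹) * (r ^ 2 + s ^ 2) := by
      nlinarith [sq_nonneg (ε * A * p - (1 + ε) * r), sq_nonneg (ε * A * q - (1 + ε) * s),
        hε, hinv]
    have hmul := mul_le_mul_of_nonneg_left core hE.le
    nlinarith [hmul]
  -- put everything together
  have hsplit : (fun x : EuclideanSpace ℝ (Fin n) =>
      ((fderiv ℝ Φ x v) ^ 2 - (1 + ε) * fderiv ℝ (fun y => fderiv ℝ Φ y v) x v)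
        * ‖u x‖ ^ 2 * Real.exp (-Φ x))
      = fun x => (1 + ε) * (((fderiv ℝ Φ x v) ^ 2 - fderiv ℝ (fun y => fderiv ℝ Φ y v) x v)
            * ‖u x‖ ^ 2 * Real.exp (-Φ x))
          - ε * ((fderiv ℝ Φ x v) ^ 2 * ‖u x‖ ^ 2 * Real.exp (-Φ x)) := by
    funext x; ring
  calc ∫ x, ((fderiv ℝ Φ x v) ^ 2 - (1 + ε) * fderiv ℝ (fun y => fderiv ℝ Φ y v) x v)
        * ‖u x‖ ^ 2 * Real.exp (-Φ x)
      = (1 + ε) * (∫ x, ((fderiv ℝ Φ x v) ^ 2 - fderiv ℝ (fun y => fderiv ℝ Φ y v) x v)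
            * ‖u x‖ ^ 2 * Real.exp (-Φ x))
        - ε * (∫ x, (fderiv ℝ Φ x v) ^ 2 * ‖u x‖ ^ 2 * Real.exp (-Φ x)) := by
        rw [hsplit, integral_sub (I1.const_mul _) (I2.const_mul _), integral_const_mul,
          integral_const_mul]
    _ = (1 + ε) * (∫ x, (fderiv ℝ Φ x v * Real.exp (-Φ x))
            * fderiv ℝ (fun x : EuclideanSpace ℝ (Fin n) => ‖u x‖ ^ 2) x v)
        - ε * (∫ x, (fderiv ℝ Φ x v) ^ 2 * ‖u x‖ ^ 2 * Real.exp (-Φ x)) := by rw [hIBP]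
    _ = ∫ x, ((1 + ε) * ((fderiv ℝ Φ x v * Real.exp (-Φ x))
            * fderiv ℝ (fun x : EuclideanSpace ℝ (Fin n) => ‖u x‖ ^ 2) x v)
          - ε * ((fderiv ℝ Φ x v) ^ 2 * ‖u x‖ ^ 2 * Real.exp (-Φ x))) := by
        rw [integral_sub (I3.const_mul _) (I2.const_mul _), integral_const_mul,
          integral_const_mul]
    _ ≤ ∫ x, (2 + ε + ε⁻¹) * (‖fderiv ℝ u x v‖ ^ 2 * Real.exp (-Φ x)) := by
        exact integral_mono ((I3.const_mul _).sub (I2.const_mul _)) (I4.const_mul _) pointwise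
    _ = (2 + ε + ε⁻¹) * ∫ x, ‖fderiv ℝ u x v‖ ^ 2 * Real.exp (-Φ x) := by
        rw [integral_const_mul]

/-- for `Φ ∈ C²(ℝⁿ, ℝ)`, `ε > 0` and `u ∈ C₀^∞(ℝⁿ)`,
`∫ (|∇Φ|² − (1+ε)ΔΦ)|u|² e^{-Φ} ≤ (2 + ε + ε⁻¹) Σ_j ∫ |∂_j u|² e^{-Φ}`. -/
theorem stmt13 {n : ℕ} (Φ : EuclideanSpace ℝ (Fin n) → ℝ) (hΦ : ContDiff ℝ 2 Φ)
    (ε : ℝ) (hε : 0 < ε)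
    (u : EuclideanSpace ℝ (Fin n) → ℂ) (hu : ContDiff ℝ (⊤ : ℕ∞) u) (hsupp : HasCompactSupport u) :
    ∫ x, ((∑ j, (fderiv ℝ Φ x (EuclideanSpace.single j 1)) ^ 2) -
        (1 + ε) * ∑ j, hessianMat Φ x j j) * ‖u x‖ ^ 2 * Real.exp (-Φ x) ≤
      (2 + ε + ε⁻¹) *
        ∑ j, ∫ x, ‖fderiv ℝ u x (EuclideanSpace.single j 1)‖ ^ 2 * Real.exp (-Φ x) := by
  classical
  -- identify the Hessian diagonal entries
  have hΦ1 : ContDiff ℝ 1 (fderiv ℝ Φ) := hΦ.fderiv_right (by norm_num)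
  have hhess : ∀ (x : EuclideanSpace ℝ (Fin n)) (j : Fin n),
      hessianMat Φ x j j = fderiv ℝ (fun y => fderiv ℝ Φ y (EuclideanSpace.single j 1)) x
        (EuclideanSpace.single j 1) := by
    intro x j
    have hd : DifferentiableAt ℝ (fderiv ℝ Φ) x := (hΦ1.differentiable one_ne_zero) x
    have hcomp := ((ContinuousLinearMap.apply ℝ ℝ (EuclideanSpace.single j 1)).hasFDerivAt.comp
      x hd.hasFDerivAt).fderiv
    have := congrArg (fun L : EuclideanSpace ℝ (Fin n) →L[ℝ] ℝ =>
      L (EuclideanSpace.single j 1)) hcomp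
    simp only [Function.comp_def, ContinuousLinearMap.coe_comp', Function.comp_apply,
      ContinuousLinearMap.apply_apply] at this
    rw [hessianMat]
    simp only [Matrix.of_apply]
    rw [iteratedFDeriv_two_apply]
    simp only [Matrix.cons_val_zero, Matrix.cons_val_one, Matrix.head_cons]
    rw [← this]
  -- continuity/compact support for integrability of each summand
  have ha' : ∀ j : Fin n, ContDiff ℝ 1 (fun x => fderiv ℝ Φ x (EuclideanSpace.single j 1)) :=
    by intro j; exact (ContinuousLinearMap.apply ℝ ℝ (EuclideanSpace.single j 1)).contDiff.comp hΦ1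
  have hacont : ∀ j : Fin n, Continuous (fun x => fderiv ℝ Φ x (EuclideanSpace.single j 1)) :=
    fun j => (ha' j).continuous
  have hbcont : ∀ j : Fin n, Continuous
      (fun x => fderiv ℝ (fun y => fderiv ℝ Φ y (EuclideanSpace.single j 1)) x
        (EuclideanSpace.single j 1)) := fun j =>
    (ContinuousLinearMap.apply ℝ ℝ (EuclideanSpace.single j 1)).continuous.comp
      ((ha' j).continuous_fderiv one_ne_zero)
  have hecont : Continuous (fun x : EuclideanSpace ℝ (Fin n) => Real.exp (-Φ x)) :=
    (Real.continuous_exp.comp (hΦ.continuous.neg))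
  have hgcont : Continuous (fun x : EuclideanSpace ℝ (Fin n) => ‖u x‖ ^ 2) :=
    ((hu.continuous).norm).pow 2
  have hgc : HasCompactSupport (fun x : EuclideanSpace ℝ (Fin n) => ‖u x‖ ^ 2) :=
    HasCompactSupport.comp_left (g := fun z : ℂ => ‖z‖ ^ 2) hsupp (by simp)
  have Ij : ∀ j : Fin n, Integrable (fun x =>
      ((fderiv ℝ Φ x (EuclideanSpace.single j 1)) ^ 2
        - (1 + ε) * fderiv ℝ (fun y => fderiv ℝ Φ y (EuclideanSpace.single j 1)) x
            (EuclideanSpace.single j 1)) * ‖u x‖ ^ 2 * Real.exp (-Φ x)) := by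
    intro j
    have := int_helper (c := fun x =>
        ((fderiv ℝ Φ x (EuclideanSpace.single j 1)) ^ 2
          - (1 + ε) * fderiv ℝ (fun y => fderiv ℝ Φ y (EuclideanSpace.single j 1)) x
              (EuclideanSpace.single j 1)) * Real.exp (-Φ x))
      (k := fun x => ‖u x‖ ^ 2)
      ((((hacont j).pow 2).sub (continuous_const.mul (hbcont j))).mul hecont) hgcont hgc
    simpa [mul_right_comm] using this
  -- rewrite the integrand as a finite sum
  have hrw : (fun x : EuclideanSpace ℝ (Fin n) =>
      ((∑ j, (fderiv ℝ Φ x (EuclideanSpace.single j 1)) ^ 2) -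
        (1 + ε) * ∑ j, hessianMat Φ x j j) * ‖u x‖ ^ 2 * Real.exp (-Φ x))
      = fun x => ∑ j, ((fderiv ℝ Φ x (EuclideanSpace.single j 1)) ^ 2
          - (1 + ε) * fderiv ℝ (fun y => fderiv ℝ Φ y (EuclideanSpace.single j 1)) x
              (EuclideanSpace.single j 1)) * ‖u x‖ ^ 2 * Real.exp (-Φ x) := by
    funext x
    simp only [hhess x]
    rw [Finset.mul_sum, ← Finset.sum_sub_distrib, Finset.sum_mul, Finset.sum_mul]
  calc ∫ x, ((∑ j, (fderiv ℝ Φ x (EuclideanSpace.single j 1)) ^ 2) -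
        (1 + ε) * ∑ j, hessianMat Φ x j j) * ‖u x‖ ^ 2 * Real.exp (-Φ x)
      = ∑ j, ∫ x, ((fderiv ℝ Φ x (EuclideanSpace.single j 1)) ^ 2
          - (1 + ε) * fderiv ℝ (fun y => fderiv ℝ Φ y (EuclideanSpace.single j 1)) x
              (EuclideanSpace.single j 1)) * ‖u x‖ ^ 2 * Real.exp (-Φ x) := by
        rw [hrw]
        exact integral_finset_sum _ (fun j _ => Ij j)
    _ ≤ ∑ j, (2 + ε + ε⁻¹) *
          ∫ x, ‖fderiv ℝ u x (EuclideanSpace.single j 1)‖ ^ 2 * Real.exp (-Φ x) :=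
        Finset.sum_le_sum (fun j _ => stmt13_aux Φ hΦ ε hε u hu hsupp _)
    _ = (2 + ε + ε⁻¹) *
          ∑ j, ∫ x, ‖fderiv ℝ u x (EuclideanSpace.single j 1)‖ ^ 2 * Real.exp (-Φ x) := by
        rw [Finset.mul_sum]
end

section
/- Let Φ ∈ C¹(ℝⁿ, ℝ) and suppose there exist ω > 0 and C > 0 such that x·∇Φ(x) ≥ |x|^{1+ω}/C whenever |x| ≥ C. Then for each k ∈ ℕ there exists a constant C₁ > 0 such that for every x ∈ ℝⁿ with |x| ≥ C and every t ∈ [0,1], (1 + |x − tx|²)^{k/2} · e^{−(Φ(x) − Φ(tx))/2} ≤ C₁. -/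
/-!
Along the ray `s ↦ s • x`, the derivative of `Φ (s • x)` is `s⁻¹ ∇Φ(s • x) · (s • x)`, which by
(IV_ω) is at least `C ^ ω / C * ‖x‖` as soon as `‖s • x‖ ≥ C`. Hence `Φ x - Φ (t • x)` grows at
least linearly in `‖x - t • x‖ = (1 - t) ‖x‖`, up to an additive constant coming from a bound of
`Φ` on the ball of radius `C`, and a linear exponential decay absorbs the polynomial weight.
-/

open Real Set Metric

theorem one_add_sq_rpow_half_le_one_add_pow (k : ℕ) {r : ℝ} (hr : 0 ≤ r) :
    (1 + r ^ 2) ^ ((k : ℝ) / 2) ≤ (1 + r) ^ k := by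
  calc (1 + r ^ 2) ^ ((k : ℝ) / 2) ≤ ((1 + r) ^ 2) ^ ((k : ℝ) / 2) := by
        gcongr; nlinarith
    _ = (1 + r) ^ k := by
        rw [← rpow_natCast (1 + r) 2, ← rpow_mul (by linarith), ← rpow_natCast (1 + r) k]
        congr 1
        push_cast
        ring

theorem one_add_pow_le_mul_exp (k : ℕ) {c r : ℝ} (hc : 0 < c) (hr : 0 ≤ 1 + r) :
    (1 + r) ^ k ≤ k.factorial / c ^ k * exp c * exp (c * r) := by
  have h := pow_div_factorial_le_exp (c * (1 + r)) (by positivity) k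
  rw [div_le_iff₀ (by positivity), mul_pow] at h
  calc (1 + r) ^ k = c ^ k * (1 + r) ^ k / c ^ k := by field_simp
    _ ≤ exp (c * (1 + r)) * k.factorial / c ^ k := by gcongr
    _ = k.factorial / c ^ k * exp c * exp (c * r) := by
        rw [mul_one_add, exp_add]; ring

theorem exists_one_add_sq_rpow_half_le_mul_exp (k : ℕ) {c : ℝ} (hc : 0 < c) :
    ∃ M > 0, ∀ r, 0 ≤ r → (1 + r ^ 2) ^ ((k : ℝ) / 2) ≤ M * exp (c * r) :=
  ⟨k.factorial / c ^ k * exp c, by positivity, fun _ hr =>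
    (one_add_sq_rpow_half_le_one_add_pow k hr).trans (one_add_pow_le_mul_exp k hc (by linarith))⟩

theorem rpow_mul_le_rpow_one_add {ω C r : ℝ} (hω : 0 ≤ ω) (hC : 0 ≤ C) (hCr : C ≤ r) :
    C ^ ω * r ≤ r ^ (1 + ω) := by
  have hr : 0 ≤ r := hC.trans hCr
  rw [rpow_one_add' hr (by linarith), mul_comm]
  gcongr

section RadialGrowth

variable {E : Type*} [NormedAddCommGroup E] [NormedSpace ℝ E] {Φ : E → ℝ} {a R : ℝ}

theorem mul_sub_le_sub_smul_of_radial_deriv (hΦ : Differentiable ℝ Φ)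
    (hgrad : ∀ y, R ≤ ‖y‖ → a * ‖y‖ ≤ fderiv ℝ Φ y y) {x : E} {u : ℝ} (hu0 : 0 ≤ u)
    (hu1 : u ≤ 1) (hRu : R ≤ u * ‖x‖) :
    a * ((1 - u) * ‖x‖) ≤ Φ x - Φ (u • x) := by
  have hray : ∀ s, HasDerivAt (fun s : ℝ => Φ (s • x)) (fderiv ℝ Φ (s • x) x) s := fun s => by
    have hline : HasDerivAt (fun s : ℝ => s • x) x s := by
      simpa using (hasDerivAt_id s).smul_const x
    exact (hΦ (s • x)).hasFDerivAt.comp_hasDerivAt s hline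
  have key := (convex_Icc u 1).mul_sub_le_image_sub_of_le_deriv (C := a * ‖x‖)
    (fun s _ => (hray s).continuousAt.continuousWithinAt)
    (fun s _ => (hray s).differentiableAt.differentiableWithinAt)
    (fun s hs => by
      rw [interior_Icc] at hs
      have hs0 : 0 < s := hu0.trans_lt hs.1
      have hnorm : ‖s • x‖ = s * ‖x‖ := by rw [norm_smul, norm_of_nonneg hs0.le]
      have h := hgrad (s • x) (by rw [hnorm]; nlinarith [norm_nonneg x, hs.1])
      rw [hnorm, map_smul, smul_eq_mul] at h
      rw [(hray s).deriv]
      nlinarith)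
    u ⟨le_rfl, hu1⟩ 1 ⟨hu1, le_rfl⟩ hu1
  simpa [mul_comm, mul_assoc] using key

variable [ProperSpace E]

theorem exists_mul_sub_le_sub_smul_of_radial_deriv (hΦ : Differentiable ℝ Φ) (ha : 0 ≤ a)
    (hR : 0 ≤ R) (hgrad : ∀ y, R ≤ ‖y‖ → a * ‖y‖ ≤ fderiv ℝ Φ y y) :
    ∃ D, ∀ (x : E) (t : ℝ), R ≤ ‖x‖ → t ∈ Icc (0 : ℝ) 1 →
      a * ((1 - t) * ‖x‖) - D ≤ Φ x - Φ (t • x) := by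
  obtain ⟨B, hB⟩ := (isCompact_closedBall (0 : E) R).exists_bound_of_continuousOn
    hΦ.continuous.continuousOn
  have hB0 : 0 ≤ B := (norm_nonneg _).trans (hB 0 (mem_closedBall_self hR))
  refine ⟨a * R + 2 * B, fun x t hx ⟨ht0, ht1⟩ => ?_⟩
  rcases le_or_gt R (t * ‖x‖) with htx | htx
  · linarith [mul_sub_le_sub_smul_of_radial_deriv hΦ hgrad ht0 ht1 htx, mul_nonneg ha hR]
  -- inside the ball, go out radially to the sphere of radius `R` and compare there
  have hx0 : 0 < ‖x‖ := (mul_nonneg ht0 (norm_nonneg x)).trans_lt htx |>.trans_le hx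
  set s := R / ‖x‖
  have hsx : s * ‖x‖ = R := div_mul_cancel₀ R hx0.ne'
  have hs0 : 0 ≤ s := div_nonneg hR hx0.le
  have hout := mul_sub_le_sub_smul_of_radial_deriv hΦ hgrad hs0
    ((div_le_one hx0).2 hx) hsx.ge
  have hΦs := hB (s • x) (by simp [norm_smul, norm_of_nonneg hs0, hsx])
  have hΦt := hB (t • x) (by simpa [norm_smul, norm_of_nonneg ht0] using htx.le)
  rw [Real.norm_eq_abs, abs_le] at hΦs hΦt
  have hsR : a * ((1 - s) * ‖x‖) = a * ‖x‖ - a * R := by rw [← hsx]; ring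
  have htR : a * ((1 - t) * ‖x‖) ≤ a * ‖x‖ := by
    gcongr; nlinarith [norm_nonneg x]
  linarith

end RadialGrowth

/-- if `Φ ∈ C¹(ℝⁿ, ℝ)` satisfies condition (IV_ω), then for each `k ∈ ℕ` there is
`C₁ > 0` with `⟨x − tx⟩^k e^{−(Φ(x)−Φ(tx))/2} ≤ C₁` for all `|x| ≥ C` and `t ∈ [0,1]`,
where `⟨y⟩ = (1+|y|²)^{1/2}`. -/
theorem stmt16 {n : ℕ} (Φ : EuclideanSpace ℝ (Fin n) → ℝ) (hΦ : ContDiff ℝ 1 Φ)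
    (ω C : ℝ) (hω : 0 < ω) (hC : 0 < C)
    (hIV : ∀ x : EuclideanSpace ℝ (Fin n), C ≤ ‖x‖ → ‖x‖ ^ (1 + ω) / C ≤ fderiv ℝ Φ x x) :
    ∀ k : ℕ, ∃ C₁ > (0 : ℝ), ∀ (x : EuclideanSpace ℝ (Fin n)) (t : ℝ),
      C ≤ ‖x‖ → t ∈ Set.Icc (0 : ℝ) 1 →
      (1 + ‖x - t • x‖ ^ 2) ^ ((k : ℝ) / 2) * Real.exp (-(Φ x - Φ (t • x)) / 2) ≤ C₁ := by
  intro k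
  set a := C ^ ω / C
  have ha : 0 < a := by positivity
  have hgrad (y : EuclideanSpace ℝ (Fin n)) (hy : C ≤ ‖y‖) : a * ‖y‖ ≤ fderiv ℝ Φ y y := by
    refine le_trans ?_ (hIV y hy)
    rw [div_mul_eq_mul_div]
    gcongr
    exact rpow_mul_le_rpow_one_add hω.le hC.le hy
  obtain ⟨D, hD⟩ := exists_mul_sub_le_sub_smul_of_radial_deriv (hΦ.differentiable one_ne_zero)
    ha.le hC.le hgrad
  obtain ⟨M, hM, hMr⟩ := exists_one_add_sq_rpow_half_le_mul_exp k (half_pos ha)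
  refine ⟨M * exp (D / 2), by positivity, fun x t hx ht => ?_⟩
  have hr : ‖x - t • x‖ = (1 - t) * ‖x‖ := by
    rw [show x - t • x = (1 - t) • x by rw [sub_smul, one_smul], norm_smul,
      norm_of_nonneg (sub_nonneg.2 ht.2)]
  rw [hr]
  calc _ ≤ M * exp (a / 2 * ((1 - t) * ‖x‖)) * exp ((D - a * ((1 - t) * ‖x‖)) / 2) := by
        gcongr
        · exact hMr _ (mul_nonneg (sub_nonneg.2 ht.2) (norm_nonneg x))
        · linarith [hD x t hx ht]
    _ = M * exp (D / 2) := by rw [mul_assoc, ← exp_add]; ring_nf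
end

section
/- Let Φ ∈ C¹(ℝⁿ, ℝ) and suppose there exist ω > 0 and C > 0 such that x·∇Φ(x) ≥ |x|^{1+ω}/C whenever |x| ≥ C. Let v : ℝⁿ → ℂⁿ be a Schwartz function and define f(x) = ∫₀¹ e^{−(Φ(x) − Φ(tx))/2} (x · v(tx)) dt. Then for every k ∈ ℕ one has sup_{x ∈ ℝⁿ} |x|^k |f(x)| < ∞; in particular f ∈ L²(ℝⁿ). -/
open MeasureTheory

/-- `f(x) = ∫₀¹ e^{−(Φ(x) − Φ(tx))/2} (x · v(tx)) dt`. -/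
noncomputable def radialSolution {n : ℕ} (Φ : EuclideanSpace ℝ (Fin n) → ℝ)
    (v : EuclideanSpace ℝ (Fin n) → EuclideanSpace ℂ (Fin n))
    (x : EuclideanSpace ℝ (Fin n)) : ℂ :=
  ∫ t in (0 : ℝ)..1,
    (Real.exp (-(Φ x - Φ (t • x)) / 2) : ℂ) * ∑ j, (x j : ℂ) * v (t • x) j

/-!
Condition (IV_ω) gives `x · ∇Φ(x) ≥ |x| / C` for `|x| ≥ max C 1`, so along each ray the function
`s ↦ Φ(s x)` has slope at least `|x| / C` as soon as `|s x| ≥ ρ := max C 1`. With `K` a bound for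
`|Φ|` on the ball of radius `ρ`, this gives, for `|x| ≥ 2ρ`, the lower bounds
`Φ(x) - Φ(t x) ≥ -2K` for all `t ∈ [0, 1]` and `Φ(x) - Φ(t x) ≥ |x| / (2C) - 2K` for `t ≤ 1/2`.
On `[0, 1/2]` the integrand of `f(x)` is therefore exponentially small in `|x|`, while on
`[1/2, 1]` we have `|t x| ≥ |x| / 2`, so the Schwartz decay of `v` gives any polynomial decay.
Rapid decay of the continuous function `f` then puts it in every `Lᵖ`.
-/

open Set

lemma EuclideanSpace.norm_sum_ofReal_mul_le {n : ℕ} (x : EuclideanSpace ℝ (Fin n))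
    (w : EuclideanSpace ℂ (Fin n)) : ‖∑ j, (x j : ℂ) * w j‖ ≤ ‖x‖ * ‖w‖ := by
  calc ‖∑ j, (x j : ℂ) * w j‖ ≤ ∑ j, ‖x j‖ * ‖w j‖ :=
        (norm_sum_le _ _).trans_eq (by simp [Complex.norm_real])
    _ ≤ √(∑ j, ‖x j‖ ^ 2) * √(∑ j, ‖w j‖ ^ 2) := Real.sum_mul_le_sqrt_mul_sqrt _ _ _
    _ = ‖x‖ * ‖w‖ := by rw [EuclideanSpace.norm_eq, EuclideanSpace.norm_eq]

lemma Real.pow_mul_exp_neg_mul_le {c r : ℝ} (hc : 0 < c) (hr : 0 ≤ r) (m : ℕ) :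
    r ^ m * Real.exp (-(c * r)) ≤ m.factorial / c ^ m := by
  have h := Real.pow_div_factorial_le_exp _ (mul_nonneg hc.le hr) m
  rw [div_le_iff₀ (by positivity), mul_pow] at h
  rw [le_div_iff₀ (by positivity), Real.exp_neg]
  calc r ^ m * (Real.exp (c * r))⁻¹ * c ^ m = c ^ m * r ^ m * (Real.exp (c * r))⁻¹ := by ring
    _ ≤ Real.exp (c * r) * m.factorial * (Real.exp (c * r))⁻¹ := by gcongr
    _ = m.factorial := by field_simp

lemma memLp_of_forall_pow_mul_le {E F : Type*} [NormedAddCommGroup E] [NormedSpace ℝ E]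
    [MeasurableSpace E] [OpensMeasurableSpace E] [NormedAddCommGroup F]
    {μ : Measure E} [μ.HasTemperateGrowth] {f : E → F} (hf : AEStronglyMeasurable f μ)
    (hdecay : ∀ k : ℕ, ∃ M, ∀ x, ‖x‖ ^ k * ‖f x‖ ≤ M) (p : ENNReal) : MemLp f p μ := by
  obtain ⟨l, hl⟩ := Measure.HasTemperateGrowth.exists_eLpNorm_lt_top p ‹_›
  obtain ⟨M₀, hM₀⟩ := hdecay 0
  obtain ⟨M, hM⟩ := hdecay l
  have hweight : MemLp (fun x : E => (1 + ‖x‖) ^ (-l : ℝ)) p μ :=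
    ⟨(Continuous.rpow_const (by fun_prop) fun x => Or.inl (by positivity)).aestronglyMeasurable,
      hl⟩
  refine (hweight.const_mul (2 ^ l * (M₀ + M))).of_le hf (ae_of_all _ fun x => ?_)
  refine le_trans ?_ (Real.le_norm_self _)
  simpa using pow_mul_le_of_le_of_pow_mul_le (k := 0) (l := l) (norm_nonneg x) (norm_nonneg (f x))
    (by simpa using hM₀ x) (by simpa using hM x)

section Radial

variable {E : Type*} [NormedAddCommGroup E] [NormedSpace ℝ E] {Φ : E → ℝ} {ρ a K : ℝ}

lemma hasDerivAt_comp_smul (hΦ : Differentiable ℝ Φ) (x : E) (s : ℝ) :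
    HasDerivAt (fun s : ℝ => Φ (s • x)) (fderiv ℝ Φ (s • x) x) s := by
  have hray : HasDerivAt (fun s : ℝ => s • x) x s := by
    simpa using (hasDerivAt_id s).smul_const x
  exact (hΦ (s • x)).hasFDerivAt.comp_hasDerivAt s hray

lemma le_fderiv_smul_apply (hgrowth : ∀ y, ρ ≤ ‖y‖ → a * ‖y‖ ≤ fderiv ℝ Φ y y) {x : E} {s : ℝ}
    (hs : 0 < s) (hsx : ρ ≤ s * ‖x‖) : a * ‖x‖ ≤ fderiv ℝ Φ (s • x) x := by
  have h := hgrowth (s • x) (by rwa [norm_smul, Real.norm_of_nonneg hs.le])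
  rw [norm_smul, Real.norm_of_nonneg hs.le, map_smul, smul_eq_mul] at h
  nlinarith

lemma mul_sub_le_sub_comp_smul (hΦ : Differentiable ℝ Φ)
    (hgrowth : ∀ y, ρ ≤ ‖y‖ → a * ‖y‖ ≤ fderiv ℝ Φ y y) {x : E} {s t : ℝ}
    (hs : 0 < s) (hsx : ρ ≤ s * ‖x‖) (hst : s ≤ t) :
    a * ‖x‖ * (t - s) ≤ Φ (t • x) - Φ (s • x) := by
  have hderiv := hasDerivAt_comp_smul hΦ x
  refine (convex_Ici s).mul_sub_le_image_sub_of_le_deriv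
    (fun u _ => (hderiv u).continuousAt.continuousWithinAt)
    (fun u _ => (hderiv u).differentiableAt.differentiableWithinAt) (fun u hu => ?_)
    s self_mem_Ici t hst hst
  rw [interior_Ici, mem_Ioi] at hu
  rw [(hderiv u).deriv]
  exact le_fderiv_smul_apply hgrowth (hs.trans hu) (hsx.trans (by gcongr))

lemma comp_smul_le_comp_smul_add (hΦ : Differentiable ℝ Φ) (hρ : 0 < ρ) (ha : 0 ≤ a)
    (hgrowth : ∀ y, ρ ≤ ‖y‖ → a * ‖y‖ ≤ fderiv ℝ Φ y y) (hK : ∀ y, ‖y‖ ≤ ρ → |Φ y| ≤ K)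
    {x : E} {s t : ℝ} (hs : 0 ≤ s) (hst : s ≤ t) (ht : ρ ≤ t * ‖x‖) :
    Φ (s • x) ≤ Φ (t • x) + 2 * K := by
  have hK0 : 0 ≤ K := (abs_nonneg _).trans (hK 0 (by simpa using hρ.le))
  have hx : 0 < ‖x‖ := (norm_nonneg x).lt_of_ne fun h => by
    rw [← h, mul_zero] at ht; linarith
  by_cases hsx : ρ ≤ s * ‖x‖
  · have hs' : 0 < s := pos_of_mul_pos_left (hρ.trans_le hsx) hx.le
    have := mul_sub_le_sub_comp_smul hΦ hgrowth hs' hsx hst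
    nlinarith [mul_nonneg (mul_nonneg ha hx.le) (sub_nonneg.2 hst)]
  · -- pass through the point `u • x` of the ray on the sphere of radius `ρ`
    set u := ρ / ‖x‖
    have hux : u * ‖x‖ = ρ := div_mul_cancel₀ ρ hx.ne'
    have hut : u ≤ t := le_of_mul_le_mul_right (hux.trans_le ht) hx
    have hmono := mul_sub_le_sub_comp_smul hΦ hgrowth (div_pos hρ hx) hux.ge hut
    have hu := abs_le.1 <|
      hK (u • x) (by rw [norm_smul, Real.norm_of_nonneg (div_pos hρ hx).le, hux])
    have hs' := abs_le.1 (hK (s • x) (by rw [norm_smul, Real.norm_of_nonneg hs]; linarith))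
    nlinarith [mul_nonneg (mul_nonneg ha hx.le) (sub_nonneg.2 hut)]

lemma neg_two_mul_le_sub_comp_smul (hΦ : Differentiable ℝ Φ) (hρ : 0 < ρ) (ha : 0 ≤ a)
    (hgrowth : ∀ y, ρ ≤ ‖y‖ → a * ‖y‖ ≤ fderiv ℝ Φ y y) (hK : ∀ y, ‖y‖ ≤ ρ → |Φ y| ≤ K)
    {x : E} (hx : ρ ≤ ‖x‖) {t : ℝ} (ht₀ : 0 ≤ t) (ht₁ : t ≤ 1) :
    -(2 * K) ≤ Φ x - Φ (t • x) := by
  have := comp_smul_le_comp_smul_add hΦ hρ ha hgrowth hK ht₀ ht₁ (by rwa [one_mul])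
  rw [one_smul] at this
  linarith

lemma mul_norm_div_two_sub_le_sub_comp_smul (hΦ : Differentiable ℝ Φ) (hρ : 0 < ρ) (ha : 0 ≤ a)
    (hgrowth : ∀ y, ρ ≤ ‖y‖ → a * ‖y‖ ≤ fderiv ℝ Φ y y) (hK : ∀ y, ‖y‖ ≤ ρ → |Φ y| ≤ K)
    {x : E} (hx : 2 * ρ ≤ ‖x‖) {t : ℝ} (ht₀ : 0 ≤ t) (ht : t ≤ 1 / 2) :
    a * ‖x‖ / 2 - 2 * K ≤ Φ x - Φ (t • x) := by
  have hhalf : ρ ≤ 1 / 2 * ‖x‖ := by linarith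
  have h₁ := comp_smul_le_comp_smul_add hΦ hρ ha hgrowth hK ht₀ ht hhalf
  have h₂ := mul_sub_le_sub_comp_smul hΦ hgrowth one_half_pos hhalf one_half_lt_one.le
  rw [one_smul] at h₂
  linarith

lemma linear_growth_of_superlinear {ω C : ℝ} (hω : 0 ≤ ω) (hC : 0 < C)
    (hIV : ∀ x : E, C ≤ ‖x‖ → ‖x‖ ^ (1 + ω) / C ≤ fderiv ℝ Φ x x) (y : E) (hy : max C 1 ≤ ‖y‖) :
    C⁻¹ * ‖y‖ ≤ fderiv ℝ Φ y y := by
  refine le_trans ?_ (hIV y ((le_max_left _ _).trans hy))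
  rw [inv_mul_eq_div]
  gcongr
  exact Real.self_le_rpow_of_one_le ((le_max_right _ _).trans hy) (by linarith)

end Radial

section RadialSolution

variable {n : ℕ} {Φ : EuclideanSpace ℝ (Fin n) → ℝ}

noncomputable def radialIntegrand (Φ : EuclideanSpace ℝ (Fin n) → ℝ)
    (v : EuclideanSpace ℝ (Fin n) → EuclideanSpace ℂ (Fin n))
    (x : EuclideanSpace ℝ (Fin n)) (t : ℝ) : ℂ :=
  (Real.exp (-(Φ x - Φ (t • x)) / 2) : ℂ) * ∑ j, (x j : ℂ) * v (t • x) j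

lemma radialSolution_eq_integral (v : EuclideanSpace ℝ (Fin n) → EuclideanSpace ℂ (Fin n))
    (x : EuclideanSpace ℝ (Fin n)) :
    radialSolution Φ v x = ∫ t in (0 : ℝ)..1, radialIntegrand Φ v x t := rfl

lemma norm_radialIntegrand_le (v : EuclideanSpace ℝ (Fin n) → EuclideanSpace ℂ (Fin n))
    (x : EuclideanSpace ℝ (Fin n)) (t : ℝ) :
    ‖radialIntegrand Φ v x t‖ ≤ Real.exp (-(Φ x - Φ (t • x)) / 2) * (‖x‖ * ‖v (t • x)‖) := by
  rw [radialIntegrand, norm_mul, Complex.norm_real, Real.norm_of_nonneg (Real.exp_nonneg _)]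
  gcongr
  exact EuclideanSpace.norm_sum_ofReal_mul_le x _

lemma continuous_radialSolution (hΦ : Continuous Φ)
    {v : EuclideanSpace ℝ (Fin n) → EuclideanSpace ℂ (Fin n)} (hv : Continuous v) :
    Continuous (radialSolution Φ v) :=
  intervalIntegral.continuous_parametric_intervalIntegral_of_continuous'
    (f := radialIntegrand Φ v) (by unfold radialIntegrand; fun_prop) 0 1

end RadialSolution

section Decay

open scoped SchwartzMap

variable {n : ℕ} {Φ : EuclideanSpace ℝ (Fin n) → ℝ} {ρ a K : ℝ}

lemma norm_radialIntegrand_le_of_two_mul_le (hΦ : Differentiable ℝ Φ) (hρ : 0 < ρ) (ha : 0 ≤ a)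
    (hgrowth : ∀ y, ρ ≤ ‖y‖ → a * ‖y‖ ≤ fderiv ℝ Φ y y) (hK : ∀ y, ‖y‖ ≤ ρ → |Φ y| ≤ K)
    (v : 𝓢(EuclideanSpace ℝ (Fin n), EuclideanSpace ℂ (Fin n))) (m : ℕ)
    {x : EuclideanSpace ℝ (Fin n)} (hx : 2 * ρ ≤ ‖x‖) {t : ℝ} (ht : t ∈ Icc (0 : ℝ) 1) :
    ‖radialIntegrand Φ v x t‖ ≤ Real.exp K * ‖x‖ * (SchwartzMap.seminorm ℝ 0 0 v *
      Real.exp (-(a / 4 * ‖x‖)) + SchwartzMap.seminorm ℝ m 0 v / (‖x‖ / 2) ^ m) := by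
  have hx0 : 0 < ‖x‖ := by linarith
  refine (norm_radialIntegrand_le v x t).trans ?_
  rcases le_total t (1 / 2) with ht₂ | ht₂
  · have hexp : Real.exp (-(Φ x - Φ (t • x)) / 2) ≤ Real.exp K * Real.exp (-(a / 4 * ‖x‖)) := by
      rw [← Real.exp_add]
      gcongr
      linarith [mul_norm_div_two_sub_le_sub_comp_smul hΦ hρ ha hgrowth hK hx ht.1 ht₂]
    calc _ ≤ Real.exp K * Real.exp (-(a / 4 * ‖x‖)) * (‖x‖ * SchwartzMap.seminorm ℝ 0 0 v) := by
          gcongr; exact SchwartzMap.norm_le_seminorm ℝ v _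
      _ ≤ _ := by
          rw [show ∀ p q r s : ℝ, p * q * (r * s) = p * r * (s * q) by intros; ring]
          gcongr
          exact le_add_of_nonneg_right (by positivity)
  · have hexp : Real.exp (-(Φ x - Φ (t • x)) / 2) ≤ Real.exp K := by
      gcongr
      linarith [neg_two_mul_le_sub_comp_smul hΦ hρ ha hgrowth hK (by linarith) ht.1 ht.2]
    have htx : ‖x‖ / 2 ≤ ‖t • x‖ := by
      rw [norm_smul, Real.norm_of_nonneg ht.1]; nlinarith
    have hv : ‖v (t • x)‖ ≤ SchwartzMap.seminorm ℝ m 0 v / (‖x‖ / 2) ^ m := by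
      rw [le_div_iff₀ (by positivity), mul_comm]
      exact (mul_le_mul_of_nonneg_right (pow_le_pow_left₀ (by positivity) htx m)
        (norm_nonneg _)).trans (SchwartzMap.norm_pow_mul_le_seminorm ℝ v m _)
    calc _ ≤ Real.exp K * (‖x‖ * (SchwartzMap.seminorm ℝ m 0 v / (‖x‖ / 2) ^ m)) := by gcongr
      _ ≤ _ := by
          rw [← mul_assoc]
          gcongr
          exact le_add_of_nonneg_left (by positivity)

lemma pow_mul_norm_radialSolution_le_of_two_mul_le (hΦ : Differentiable ℝ Φ) (hρ : 0 < ρ)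
    (ha : 0 < a) (hgrowth : ∀ y, ρ ≤ ‖y‖ → a * ‖y‖ ≤ fderiv ℝ Φ y y)
    (hK : ∀ y, ‖y‖ ≤ ρ → |Φ y| ≤ K) (v : 𝓢(EuclideanSpace ℝ (Fin n), EuclideanSpace ℂ (Fin n)))
    (k : ℕ) {x : EuclideanSpace ℝ (Fin n)} (hx : 2 * ρ ≤ ‖x‖) :
    ‖x‖ ^ k * ‖radialSolution Φ v x‖ ≤ Real.exp K *
      (SchwartzMap.seminorm ℝ 0 0 v * ((k + 1).factorial / (a / 4) ^ (k + 1)) +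
        2 ^ (k + 1) * SchwartzMap.seminorm ℝ (k + 1) 0 v) := by
  have hx0 : 0 < ‖x‖ := by linarith
  have hint := intervalIntegral.norm_integral_le_of_norm_le_const fun t ht =>
    norm_radialIntegrand_le_of_two_mul_le hΦ hρ ha.le hgrowth hK v (k + 1) hx
      (Ioc_subset_Icc_self (by rwa [uIoc_of_le zero_le_one] at ht))
  rw [sub_zero, abs_one, mul_one] at hint
  rw [radialSolution_eq_integral]
  calc _ ≤ ‖x‖ ^ k * (Real.exp K * ‖x‖ * (SchwartzMap.seminorm ℝ 0 0 v *
        Real.exp (-(a / 4 * ‖x‖)) + SchwartzMap.seminorm ℝ (k + 1) 0 v / (‖x‖ / 2) ^ (k + 1))) := by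
        gcongr
    _ = Real.exp K * (SchwartzMap.seminorm ℝ 0 0 v * (‖x‖ ^ (k + 1) *
        Real.exp (-(a / 4 * ‖x‖))) + 2 ^ (k + 1) * SchwartzMap.seminorm ℝ (k + 1) 0 v) := by
          rw [div_pow]
          field_simp
          ring
    _ ≤ _ := by
          gcongr
          exact Real.pow_mul_exp_neg_mul_le (by positivity) hx0.le _

theorem radialSolution_decay (hΦ : Differentiable ℝ Φ) (hρ : 0 < ρ) (ha : 0 < a)
    (hgrowth : ∀ y, ρ ≤ ‖y‖ → a * ‖y‖ ≤ fderiv ℝ Φ y y)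
    (v : 𝓢(EuclideanSpace ℝ (Fin n), EuclideanSpace ℂ (Fin n))) (k : ℕ) :
    ∃ M, ∀ x, ‖x‖ ^ k * ‖radialSolution Φ v x‖ ≤ M := by
  obtain ⟨K, hK⟩ := (isCompact_closedBall 0 ρ).exists_bound_of_continuousOn
    hΦ.continuous.continuousOn
  have hf := continuous_radialSolution hΦ.continuous v.continuous
  obtain ⟨M, hM⟩ := (isCompact_closedBall 0 (2 * ρ)).exists_bound_of_continuousOn
    (f := fun x => ‖x‖ ^ k * ‖radialSolution Φ v x‖) (by fun_prop)
  have hlarge := fun x (hx : 2 * ρ ≤ ‖x‖) => pow_mul_norm_radialSolution_le_of_two_mul_le hΦ hρ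
    ha hgrowth (fun y hy => hK y (mem_closedBall_zero_iff.2 hy)) v k hx
  exact ⟨max M _, fun x => (le_total ‖x‖ (2 * ρ)).elim
    (fun hx => le_max_of_le_left <|
      (Real.le_norm_self _).trans (hM x (mem_closedBall_zero_iff.2 hx)))
    (fun hx => le_max_of_le_right (hlarge x hx))⟩

end Decay

/-- if `Φ ∈ C¹(ℝⁿ, ℝ)` satisfies condition (IV_ω) and `v` is a Schwartz function,
then `f(x) = ∫₀¹ e^{−(Φ(x)−Φ(tx))/2} (x·v(tx)) dt` satisfies `sup_x |x|^k |f(x)| < ∞` for all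
`k`; in particular `f ∈ L²(ℝⁿ)`. -/
theorem stmt17 {n : ℕ} (Φ : EuclideanSpace ℝ (Fin n) → ℝ) (hΦ : ContDiff ℝ 1 Φ)
    (ω C : ℝ) (hω : 0 < ω) (hC : 0 < C)
    (hIV : ∀ x : EuclideanSpace ℝ (Fin n), C ≤ ‖x‖ → ‖x‖ ^ (1 + ω) / C ≤ fderiv ℝ Φ x x)
    (v : SchwartzMap (EuclideanSpace ℝ (Fin n)) (EuclideanSpace ℂ (Fin n))) :
    (∀ k : ℕ, ∃ M : ℝ, ∀ x : EuclideanSpace ℝ (Fin n),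
      ‖x‖ ^ k * ‖radialSolution Φ (⇑v) x‖ ≤ M) ∧
    MemLp (radialSolution Φ (⇑v)) 2 volume := by
  have hdecay := radialSolution_decay (hΦ.differentiable one_ne_zero) (lt_max_of_lt_right one_pos)
    (inv_pos.2 hC) (linear_growth_of_superlinear hω.le hC hIV) v
  exact ⟨hdecay, memLp_of_forall_pow_mul_le
    (continuous_radialSolution hΦ.continuous v.continuous).aestronglyMeasurable hdecay 2⟩
end

section
/- Let H be a complex Hilbert space and A : H → H a bounded self-adjoint operator which is invertible and satisfies Re⟨Aw, w⟩ ≥ c‖w‖² for some c > 0 and all w ∈ H. Then for every v ∈ H, ⟨A⁻¹v, v⟩ = sup { |⟨v, w⟩|² / ⟨Aw, w⟩ : w ∈ H, w ≠ 0 }; moreover |⟨v, w⟩|² ≤ ⟨A⁻¹v, v⟩ · ⟨Aw, w⟩ for all v, w ∈ H, with equality when v = Aw. -/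
/-!
For a positive operator `A` the form `(x, y) ↦ ⟪A x, y⟫` is a semi-inner product, and Cauchy–Schwarz
for it at `x = A⁻¹ v` reads `|⟪v, w⟫|² ≤ ⟪A⁻¹ v, v⟫ ⟪A w, w⟫`. Equality holds at `w = A⁻¹ v`, so the
supremum of the quotients `|⟪v, w⟫|² / ⟪A w, w⟫` is attained and equals `⟪A⁻¹ v, v⟫`.
-/

open scoped ComplexInnerProductSpace

namespace LinearMap

variable {𝕜 E : Type*} [RCLike 𝕜] [NormedAddCommGroup E] [InnerProductSpace 𝕜 E]

open RCLike

theorem IsSymmetric.norm_inner_apply_self_sq {T : E →ₗ[𝕜] E} (hT : T.IsSymmetric) (x : E) :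
    ‖inner 𝕜 (T x) x‖ ^ 2 = re (inner 𝕜 (T x) x) ^ 2 := by
  rw [← hT.coe_re_inner_apply_self, norm_ofReal, sq_abs, hT.coe_re_inner_apply_self]

theorem IsPositive.norm_inner_sq_le {T : E →ₗ[𝕜] E} (hT : T.IsPositive) (x y : E) :
    ‖inner 𝕜 (T x) y‖ ^ 2 ≤ re (inner 𝕜 (T x) x) * re (inner 𝕜 (T y) y) := by
  let core : PreInnerProductSpace.Core 𝕜 E :=
    { inner x y := inner 𝕜 (T x) y
      conj_inner_symm x y := by simp only [inner_conj_symm, hT.isSymmetric y x]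
      re_inner_nonneg := hT.re_inner_nonneg_left
      add_left x y z := by simp only [map_add, inner_add_left]
      smul_left x y r := by simp only [map_smul, inner_smul_left] }
  have h : ‖inner 𝕜 (T x) y‖ * ‖inner 𝕜 (T y) x‖ ≤
      re (inner 𝕜 (T x) x) * re (inner 𝕜 (T y) y) :=
    InnerProductSpace.Core.inner_mul_inner_self_le (c := core) x y
  rwa [hT.isSymmetric y x, ← inner_conj_symm y (T x), norm_conj, ← sq] at h

variable {A B : E →ₗ[𝕜] E}

theorem IsPositive.norm_inner_sq_le_of_rightInverse (hA : A.IsPositive)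
    (hAB : ∀ v, A (B v) = v) (v w : E) :
    ‖inner 𝕜 v w‖ ^ 2 ≤ re (inner 𝕜 (B v) v) * re (inner 𝕜 (A w) w) := by
  simpa only [hAB, inner_re_symm v] using hA.norm_inner_sq_le (B v) w

theorem IsPositive.re_inner_eq_sSup_of_rightInverse (hA : A.IsPositive)
    (hA_pos : ∀ w, w ≠ 0 → 0 < re (inner 𝕜 (A w) w)) (hAB : ∀ v, A (B v) = v) (v : E) :
    re (inner 𝕜 (B v) v) =
      sSup {r : ℝ | ∃ w : E, w ≠ 0 ∧ r = ‖inner 𝕜 v w‖ ^ 2 / re (inner 𝕜 (A w) w)} := by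
  set S := {r : ℝ | ∃ w : E, w ≠ 0 ∧ r = ‖inner 𝕜 v w‖ ^ 2 / re (inner 𝕜 (A w) w)}
  rcases eq_or_ne v 0 with hv | hv
  · -- `S` is `∅` or `{0}`, and `sSup` is `0` in both cases
    have hS : ∀ r ∈ S, r = 0 := by
      rintro _ ⟨w, -, rfl⟩
      simp [hv]
    rw [hv, map_zero, inner_zero_left, map_zero]
    exact (le_antisymm (Real.sSup_nonpos fun r hr => (hS r hr).le)
      (Real.sSup_nonneg fun r hr => (hS r hr).ge)).symm
  have hBv : B v ≠ 0 := fun h => hv (by rw [← hAB v, h, map_zero])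
  have hBv_re : re (inner 𝕜 (A (B v)) (B v)) = re (inner 𝕜 (B v) v) := by
    rw [hAB, inner_re_symm]
  have hv_inner : inner 𝕜 v (B v) = inner 𝕜 (A (B v)) (B v) := by rw [hAB]
  refine (IsGreatest.csSup_eq ⟨?_, ?_⟩).symm
  · refine ⟨B v, hBv, ?_⟩
    rw [hv_inner, hA.isSymmetric.norm_inner_apply_self_sq, hBv_re, sq,
      mul_div_cancel_right₀ _ (hBv_re ▸ hA_pos _ hBv).ne']
  · rintro _ ⟨w, hw, rfl⟩
    exact (div_le_iff₀ (hA_pos w hw)).2 (hA.norm_inner_sq_le_of_rightInverse hAB v w)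

end LinearMap

/-- if `A` is a bounded self-adjoint invertible operator on a complex Hilbert
space with `Re⟨Aw, w⟩ ≥ c‖w‖²` for some `c > 0` (with two-sided inverse `B = A⁻¹`), then
`⟨A⁻¹v, v⟩ = sup { |⟨v,w⟩|²/⟨Aw,w⟩ : w ≠ 0 }`, and `|⟨v,w⟩|² ≤ ⟨A⁻¹v,v⟩⟨Aw,w⟩` for all `v, w`,
with equality when `v = Aw`. -/
theorem stmt18 {H : Type*} [NormedAddCommGroup H] [InnerProductSpace ℂ H] [CompleteSpace H]
    (A B : H →L[ℂ] H) (hA : IsSelfAdjoint A)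
    (hAB : A.comp B = ContinuousLinearMap.id ℂ H)
    (hBA : B.comp A = ContinuousLinearMap.id ℂ H)
    (c : ℝ) (hc : 0 < c) (hlb : ∀ w : H, c * ‖w‖ ^ 2 ≤ (⟪A w, w⟫).re) :
    (∀ v : H, (⟪B v, v⟫).re =
      sSup {r : ℝ | ∃ w : H, w ≠ 0 ∧ r = ‖(⟪v, w⟫ : ℂ)‖ ^ 2 / (⟪A w, w⟫).re}) ∧
    (∀ v w : H, ‖(⟪v, w⟫ : ℂ)‖ ^ 2 ≤ (⟪B v, v⟫).re * (⟪A w, w⟫).re) ∧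
    (∀ w : H, ‖(⟪A w, w⟫ : ℂ)‖ ^ 2 = (⟪B (A w), A w⟫).re * (⟪A w, w⟫).re) := by
  have hAB' : ∀ v, A (B v) = v := DFunLike.congr_fun hAB
  have hBA' : ∀ w, B (A w) = w := DFunLike.congr_fun hBA
  have hA_pos : ∀ w, w ≠ 0 → 0 < (⟪A w, w⟫).re := fun w hw =>
    (mul_pos hc (pow_pos (norm_pos_iff.2 hw) 2)).trans_le (hlb w)
  have hA_nonneg : (A : H →ₗ[ℂ] H).IsPositive :=
    (A.isPositive_def'.2 ⟨hA, fun w => (by positivity : 0 ≤ c * ‖w‖ ^ 2).trans (hlb w)⟩).toLinearMap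
  refine ⟨hA_nonneg.re_inner_eq_sSup_of_rightInverse hA_pos hAB',
    hA_nonneg.norm_inner_sq_le_of_rightInverse hAB', fun w => ?_⟩
  rw [hBA', ← RCLike.re_to_complex, inner_re_symm]
  exact (hA_nonneg.isSymmetric.norm_inner_apply_self_sq w).trans (sq _)
end
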